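/- arXiv:math/0301103 — 7 statements merged into one kernel-verified Lean document; each statement's English description precedes it below -/
import Mathlib

section
/- For any integers a ≤ y ≤ b and natural numbers m, n, the double sum ∑_{x₁=a}^{y} ∑_{x₂=y}^{b} [(x₁)_m (x₂+1)_n − (x₁)_n (x₂+1)_m] equals (1/((m+1)(n+1))) · [(a−1)_{n+1}(b+1)_{m+1} − (a−1)_{m+1}(b+1)_{n+1} − (a−1)_{n+1}(y)_{m+1} + (b+1)_{n+1}(y)_{m+1} + (a−1)_{m+1}(y)_{n+1} − (b+1)_{m+1}(y)_{n+1}], where (x)_m denotes the rising factorial x(x+1)⋯(x+m−1). -/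
/-!
The forward difference of `x ↦ (x - 1)_{m+1}` is `(m + 1) (x)_m`, so a sum of `(x)_m` over an
integer interval telescopes to a difference of `(·)_{m+1}` at its ends. The double sum splits
into products of two such single sums.
-/

/-- The rising factorial (Pochhammer symbol) `(x)_n = x(x+1)⋯(x+n-1)`. -/
def poch (x : ℚ) (n : ℕ) : ℚ := ∏ i ∈ Finset.range n, (x + i)

lemma poch_succ (x : ℚ) (m : ℕ) : poch x (m + 1) = poch x m * (x + m) := by
  simp [poch, Finset.prod_range_succ]

lemma poch_sub_one_succ (x : ℚ) (m : ℕ) : poch (x - 1) (m + 1) = (x - 1) * poch x m := by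
  rw [poch, poch, Finset.prod_range_succ', mul_comm]
  congr 1
  · simp
  · exact Finset.prod_congr rfl fun i _ => by push_cast; ring

lemma poch_succ_sub_poch_sub_one_succ (x : ℚ) (m : ℕ) :
    poch x (m + 1) - poch (x - 1) (m + 1) = (m + 1) * poch x m := by
  rw [poch_succ, poch_sub_one_succ]; ring

lemma sum_Icc_poch_add (c : ℚ) (m : ℕ) (a y : ℤ) (hay : a ≤ y) :
    ∑ x ∈ Finset.Icc a y, poch (x + c) m
      = (poch (y + c) (m + 1) - poch (a + c - 1) (m + 1)) / (m + 1) := by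
  have hm : (m : ℚ) + 1 ≠ 0 := by positivity
  induction y, hay using Int.leInduction with
  | base =>
    rw [Finset.Icc_self, Finset.sum_singleton, eq_div_iff hm, poch_succ_sub_poch_sub_one_succ,
      mul_comm]
  | succ y hay ih =>
    have hIcc : Finset.Icc a (y + 1) = insert (y + 1) (Finset.Icc a y) := by
      ext z; simp only [Finset.mem_insert, Finset.mem_Icc]; omega
    have hstep := poch_succ_sub_poch_sub_one_succ ((y : ℚ) + 1 + c) m
    rw [show (y : ℚ) + 1 + c - 1 = y + c by ring] at hstep
    rw [hIcc, Finset.sum_insert (by simp), ih]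
    push_cast
    field_simp
    linarith

/-- For integers `a ≤ y ≤ b` and naturals `m n`, the double sum
`∑_{x₁=a}^{y} ∑_{x₂=y}^{b} ((x₁)_m (x₂+1)_n − (x₁)_n (x₂+1)_m)` has the stated
closed form. -/
theorem stmt_2 (a b y : ℤ) (hay : a ≤ y) (hyb : y ≤ b) (m n : ℕ) :
    (∑ x₁ ∈ Finset.Icc a y, ∑ x₂ ∈ Finset.Icc y b,
      (poch (x₁ : ℚ) m * poch ((x₂ : ℚ) + 1) n - poch (x₁ : ℚ) n * poch ((x₂ : ℚ) + 1) m))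
    = (1 / ((m + 1) * (n + 1))) *
      (poch ((a : ℚ) - 1) (n + 1) * poch ((b : ℚ) + 1) (m + 1)
        - poch ((a : ℚ) - 1) (m + 1) * poch ((b : ℚ) + 1) (n + 1)
        - poch ((a : ℚ) - 1) (n + 1) * poch (y : ℚ) (m + 1)
        + poch ((b : ℚ) + 1) (n + 1) * poch (y : ℚ) (m + 1)
        + poch ((a : ℚ) - 1) (m + 1) * poch (y : ℚ) (n + 1)
        - poch ((b : ℚ) + 1) (m + 1) * poch (y : ℚ) (n + 1)) := by
  have hleft (k : ℕ) : ∑ x ∈ Finset.Icc a y, poch (x : ℚ) k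
      = (poch (y : ℚ) (k + 1) - poch ((a : ℚ) - 1) (k + 1)) / (k + 1) := by
    simpa using sum_Icc_poch_add 0 k a y hay
  have hright (k : ℕ) : ∑ x ∈ Finset.Icc y b, poch ((x : ℚ) + 1) k
      = (poch ((b : ℚ) + 1) (k + 1) - poch (y : ℚ) (k + 1)) / (k + 1) := by
    simpa using sum_Icc_poch_add 1 k y b hyb
  simp only [Finset.sum_sub_distrib, ← Finset.mul_sum, ← Finset.sum_mul, hleft, hright]
  have hm : (m : ℚ) + 1 ≠ 0 := by positivity
  have hn : (n : ℚ) + 1 ≠ 0 := by positivity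
  field_simp
  ring
end

section
/- Let F(x₁,x₂) be a polynomial over ℚ of degree at most R in each of x₁ and x₂, and suppose that F(x₁,x₂) + F(x₂+1, x₁−1) has total degree at most R (as a polynomial in x₁, x₂). Then for fixed integers a and b, the function y ↦ ∑_{x₁=a}^{y} ∑_{x₂=y}^{b} F(x₁,x₂) agrees with a polynomial in y of degree at most R+2. -/
open Polynomial Finset

/-- Extended summation convention: `∑_{i=a}^{b} f(i)` equals the usual sum if `a ≤ b`,
`0` if `b = a-1`, and `-(f(b+1)+⋯+f(a-1))` if `b+1 ≤ a-1`. -/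
noncomputable def esum (a b : ℤ) (f : ℤ → ℚ) : ℚ :=
  if a ≤ b + 1 then ∑ i ∈ Finset.Icc a b, f i else -∑ i ∈ Finset.Icc (b + 1) (a - 1), f i

theorem esum_congr {a b : ℤ} {f g : ℤ → ℚ} (h : ∀ i, f i = g i) : esum a b f = esum a b g := by
  unfold esum; split_ifs <;> simp [h]

theorem esum_sum {ι : Type*} (s : Finset ι) (a b : ℤ) (g : ι → ℤ → ℚ) :
    esum a b (fun i => ∑ m ∈ s, g m i) = ∑ m ∈ s, esum a b (g m) := by
  unfold esum; split_ifs
  · exact Finset.sum_comm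
  · rw [Finset.sum_comm]; simp [Finset.sum_neg_distrib]

theorem esum_const_mul (a b : ℤ) (c : ℚ) (f : ℤ → ℚ) :
    esum a b (fun i => c * f i) = c * esum a b f := by
  unfold esum; split_ifs <;> simp [Finset.mul_sum]

theorem esum_add (a b : ℤ) (f g : ℤ → ℚ) :
    esum a b (fun i => f i + g i) = esum a b f + esum a b g := by
  unfold esum; split_ifs <;> simp [Finset.sum_add_distrib] <;> ring

theorem esum_comm (a b c d : ℤ) (g : ℤ → ℤ → ℚ) :
    esum a b (fun i => esum c d (fun j => g i j)) =
      esum c d (fun j => esum a b (fun i => g i j)) := by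
  unfold esum; split_ifs <;> simp [Finset.sum_neg_distrib] <;> exact Finset.sum_comm

lemma sum_Icc_shift (f : ℤ → ℚ) (c d k : ℤ) :
    ∑ i ∈ Icc (c + k) (d + k), f i = ∑ i ∈ Icc c d, f (i + k) := by
  rw [← Finset.map_add_right_Icc, Finset.sum_map]; rfl

theorem esum_shift (a b k : ℤ) (f : ℤ → ℚ) :
    esum a b (fun i => f (i + k)) = esum (a + k) (b + k) f := by
  unfold esum
  rcases le_or_gt a (b + 1) with h | h
  · rw [if_pos h, if_pos (by omega)]
    have : b + k = b + 1 + k - 1 + k - k := by ring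
    rw [show Icc (a+k) (b+k) = Icc (a+k) (b+k) from rfl, ← sum_Icc_shift]
  · rw [if_neg (by omega), if_neg (by omega)]
    have e1 : b + k + 1 = (b + 1) + k := by ring
    have e2 : a + k - 1 = (a - 1) + k := by ring
    rw [e1, e2, sum_Icc_shift]

noncomputable def desc : ℕ → Polynomial ℚ := fun n => ∏ i ∈ Finset.range n, (X - C (i : ℚ))

lemma desc_monic (n : ℕ) : (desc n).Monic :=
  monic_prod_of_monic _ _ fun i _ => monic_X_sub_C _

lemma desc_natDegree (n : ℕ) : (desc n).natDegree = n := by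
  rw [desc, natDegree_prod _ _ (fun i _ => X_sub_C_ne_zero _)]
  simp only [natDegree_X_sub_C]
  simp

lemma desc_eval_succ (n : ℕ) (x : ℚ) :
    (desc (n + 1)).eval (x + 1) - (desc (n + 1)).eval x = (n + 1) * (desc n).eval x := by
  have h1 : (desc (n + 1)).eval (x + 1) = (x + 1) * (desc n).eval x := by
    rw [desc, desc, eval_prod, eval_prod, Finset.prod_range_succ']
    simp only [eval_sub, eval_X, eval_C]
    push_cast
    rw [mul_comm]
    congr 1
    · ring
    · exact Finset.prod_congr rfl fun i _ => by push_cast; ring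
  have h2 : (desc (n + 1)).eval x = (desc n).eval x * (x - n) := by
    rw [desc, desc, eval_prod, eval_prod, Finset.prod_range_succ]
    simp
  rw [h1, h2]; ring

lemma antider : ∀ n : ℕ, ∀ p : Polynomial ℚ, p.natDegree ≤ n →
    ∃ q : Polynomial ℚ, q.natDegree ≤ n + 1 ∧ ∀ x : ℚ, q.eval (x + 1) - q.eval x = p.eval x := by
  intro n
  induction n with
  | zero =>
    intro p hp
    obtain ⟨c, rfl⟩ := natDegree_eq_zero.mp (le_antisymm hp (Nat.zero_le _))
    refine ⟨C c * X, ?_, fun x => by simp; ring⟩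
    exact le_trans (natDegree_C_mul_le _ _) (by simp)
  | succ n ih =>
    intro p hp
    set c := p.coeff (n + 1) with hc
    have hdesc : (desc (n + 1)).coeff (n + 1) = 1 := by
      have := (desc_monic (n + 1)).coeff_natDegree
      rwa [desc_natDegree] at this
    have hp' : (p - C c * desc (n + 1)).natDegree ≤ n := by
      rw [natDegree_le_iff_coeff_eq_zero]
      intro N hN
      rcases eq_or_lt_of_le (Nat.succ_le_of_lt hN) with hN1 | hN1
      · simp only [coeff_sub, coeff_C_mul]
        rw [← hN1, hdesc, mul_one, hc, sub_self]
      · have d1 : p.coeff N = 0 := coeff_eq_zero_of_natDegree_lt (lt_of_le_of_lt hp hN1)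
        have d2 : (desc (n + 1)).coeff N = 0 :=
          coeff_eq_zero_of_natDegree_lt (by rw [desc_natDegree]; exact hN1)
        simp [d1, d2]
    obtain ⟨q', hq'd, hq'⟩ := ih _ hp'
    refine ⟨q' + C (c / ((n : ℚ) + 1 + 1)) * desc (n + 1 + 1), ?_, fun x => ?_⟩
    · refine le_trans (natDegree_add_le _ _) (max_le (by omega) ?_)
      exact le_trans (natDegree_C_mul_le _ _) (by rw [desc_natDegree])
    · have h2 := desc_eval_succ (n + 1) x
      push_cast at h2
      have h3 := hq' x
      simp only [eval_sub, eval_mul, eval_C] at h3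
      have hne : (n : ℚ) + 1 + 1 ≠ 0 := by positivity
      have hck : c = (c / ((n : ℚ) + 1 + 1)) * ((n : ℚ) + 1 + 1) := by field_simp
      simp only [eval_add, eval_mul, eval_C]
      linear_combination h3 + (c / ((n : ℚ) + 1 + 1)) * h2 - eval x (desc (n + 1)) * hck

lemma Icc_int_succ_top (c d : ℤ) (h : c ≤ d + 1) :
    Finset.Icc c (d + 1) = insert (d + 1) (Finset.Icc c d) := by
  ext i; simp; omega

lemma tele (p Q : Polynomial ℚ) (hQ : ∀ x : ℚ, Q.eval (x + 1) - Q.eval x = p.eval x)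
    (c : ℤ) : ∀ d : ℤ, c - 1 ≤ d →
      ∑ i ∈ Finset.Icc c d, p.eval (i : ℚ) = Q.eval ((d : ℚ) + 1) - Q.eval (c : ℚ) := by
  refine Int.le_induction ?_ ?_
  · rw [Finset.Icc_eq_empty (by omega)]
    have h1 : ((c : ℚ) - 1) + 1 = (c : ℚ) := by ring
    push_cast
    rw [h1]
    simp
  · intro d hd ih
    rw [Icc_int_succ_top c d (by omega), Finset.sum_insert (by simp), ih]
    have h2 := hQ ((d : ℚ) + 1)
    push_cast
    linarith

theorem esum_poly (p Q : Polynomial ℚ) (hQ : ∀ x : ℚ, Q.eval (x + 1) - Q.eval x = p.eval x)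
    (c d : ℤ) : esum c d (fun i => p.eval (i : ℚ)) = Q.eval ((d : ℚ) + 1) - Q.eval (c : ℚ) := by
  unfold esum
  split_ifs with h
  · exact tele p Q hQ c d (by omega)
  · rw [tele p Q hQ (d + 1) (c - 1) (by omega)]
    push_cast
    ring

noncomputable def qpoly (k : ℕ) : Polynomial ℚ :=
  Classical.choose (antider k (X ^ k) (by rw [natDegree_X_pow]))

lemma qpoly_natDegree (k : ℕ) : (qpoly k).natDegree ≤ k + 1 :=
  (Classical.choose_spec (antider k (X ^ k) (by rw [natDegree_X_pow]))).1

lemma qpoly_delta (k : ℕ) (x : ℚ) : (qpoly k).eval (x + 1) - (qpoly k).eval x = x ^ k := by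
  have h := (Classical.choose_spec (antider k (X ^ k) (by rw [natDegree_X_pow]))).2 x
  rw [eval_pow, eval_X] at h
  exact h

lemma esum_pow (k : ℕ) (c d : ℤ) :
    esum c d (fun i => (i : ℚ) ^ k) =
      (qpoly k).eval ((d : ℚ) + 1) - (qpoly k).eval (c : ℚ) := by
  have := esum_poly (X ^ k) (qpoly k) (fun x => by simpa using qpoly_delta k x) c d
  simpa using this

def IsPolyLe (d : ℕ) (g : ℤ → ℚ) : Prop :=
  ∃ p : Polynomial ℚ, p.natDegree ≤ d ∧ ∀ y : ℤ, g y = p.eval (y : ℚ)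

lemma IsPolyLe.mono {d d' : ℕ} {g : ℤ → ℚ} (h : d ≤ d') (hg : IsPolyLe d g) :
    IsPolyLe d' g := by
  obtain ⟨p, hp, he⟩ := hg; exact ⟨p, le_trans hp h, he⟩

lemma IsPolyLe.sub {d : ℕ} {g h : ℤ → ℚ} (hg : IsPolyLe d g) (hh : IsPolyLe d h) :
    IsPolyLe d (fun y => g y - h y) := by
  obtain ⟨p, hp, hpe⟩ := hg; obtain ⟨q, hq, hqe⟩ := hh
  exact ⟨p - q, le_trans (natDegree_sub_le _ _) (max_le hp hq),
    fun y => by simp [hpe y, hqe y]⟩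

lemma IsPolyLe.add {d : ℕ} {g h : ℤ → ℚ} (hg : IsPolyLe d g) (hh : IsPolyLe d h) :
    IsPolyLe d (fun y => g y + h y) := by
  obtain ⟨p, hp, hpe⟩ := hg; obtain ⟨q, hq, hqe⟩ := hh
  exact ⟨p + q, le_trans (natDegree_add_le _ _) (max_le hp hq),
    fun y => by simp [hpe y, hqe y]⟩

lemma IsPolyLe.congr {d : ℕ} {g h : ℤ → ℚ} (hg : IsPolyLe d g) (he : ∀ y, g y = h y) :
    IsPolyLe d h := by
  obtain ⟨p, hp, hpe⟩ := hg; exact ⟨p, hp, fun y => (he y) ▸ hpe y⟩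

lemma isPolyLe_of_delta {d : ℕ} {g E : ℤ → ℚ} (hE : IsPolyLe d E)
    (hΔ : ∀ y : ℤ, g (y + 1) - g y = E y) : IsPolyLe (d + 1) g := by
  obtain ⟨pE, hpd, hpe⟩ := hE
  obtain ⟨Q, hQd, hQ⟩ := antider d pE hpd
  have key : ∀ y : ℤ, g y = Q.eval (y : ℚ) + (g 0 - Q.eval 0) := by
    intro y
    induction y using Int.induction_on with
    | zero => simp
    | succ i ih =>
      have h1 := hΔ i
      have h2 := hQ (i : ℚ)
      have h3 := hpe i
      push_cast at *
      linarith
    | pred i ih =>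
      have h1 := hΔ (-(i : ℤ) - 1)
      rw [show (-(i : ℤ) - 1 + 1) = -(i : ℤ) by ring] at h1
      have h3 := hpe (-(i : ℤ) - 1)
      have h2 := hQ (-(i : ℚ) - 1)
      rw [show (-(i : ℚ) - 1 + 1) = -(i : ℚ) by ring] at h2
      push_cast at *
      linarith
  exact ⟨Q + C (g 0 - Q.eval 0), le_trans (natDegree_add_le _ _)
    (max_le hQd (by simp)), fun y => by rw [key y]; simp⟩

lemma eval_expand (P : MvPolynomial (Fin 2) ℚ) (u v : ℚ) :
    MvPolynomial.eval (fun i : Fin 2 => if i = 0 then u else v) P =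
      ∑ m ∈ P.support, P.coeff m * u ^ m 0 * v ^ m 1 := by
  rw [MvPolynomial.eval_eq']
  refine Finset.sum_congr rfl fun m _ => ?_
  rw [Fin.prod_univ_two]
  rw [if_pos rfl, if_neg (by decide : ¬((1 : Fin 2) = 0))]
  ring

lemma mem_support_deg0 {P : MvPolynomial (Fin 2) ℚ} {m} (hm : m ∈ P.support) :
    m 0 ≤ P.degreeOf 0 := by
  rw [MvPolynomial.degreeOf_eq_sup]; exact Finset.le_sup (f := fun m => m 0) hm

lemma mem_support_deg1 {P : MvPolynomial (Fin 2) ℚ} {m} (hm : m ∈ P.support) :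
    m 1 ≤ P.degreeOf 1 := by
  rw [MvPolynomial.degreeOf_eq_sup]; exact Finset.le_sup (f := fun m => m 1) hm

lemma mem_support_total {P : MvPolynomial (Fin 2) ℚ} {m} (hm : m ∈ P.support) :
    m 0 + m 1 ≤ P.totalDegree := by
  have h := MvPolynomial.le_totalDegree hm
  rwa [Finsupp.sum_fintype _ _ (fun _ => rfl), Fin.sum_univ_two] at h

lemma double_expand (P : MvPolynomial (Fin 2) ℚ) (c l u yy : ℤ) :
    esum c yy (fun x₁ => esum l u (fun x₂ =>
      MvPolynomial.eval (fun i : Fin 2 => if i = 0 then (x₁ : ℚ) else (x₂ : ℚ)) P)) =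
    ∑ m ∈ P.support, P.coeff m *
      ((qpoly (m 1)).eval ((u : ℚ) + 1) - (qpoly (m 1)).eval (l : ℚ)) *
      ((qpoly (m 0)).eval ((yy : ℚ) + 1) - (qpoly (m 0)).eval (c : ℚ)) := by
  have h1 : ∀ x₁ : ℤ, esum l u (fun x₂ =>
      MvPolynomial.eval (fun i : Fin 2 => if i = 0 then (x₁ : ℚ) else (x₂ : ℚ)) P) =
      ∑ m ∈ P.support, (P.coeff m *
        ((qpoly (m 1)).eval ((u : ℚ) + 1) - (qpoly (m 1)).eval (l : ℚ))) * (x₁ : ℚ) ^ m 0 := by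
    intro x₁
    rw [esum_congr (fun x₂ => eval_expand P (x₁ : ℚ) (x₂ : ℚ))]
    rw [esum_sum]
    refine Finset.sum_congr rfl fun m _ => ?_
    have e1 : ∀ x₂ : ℤ, P.coeff m * (x₁ : ℚ) ^ m 0 * (x₂ : ℚ) ^ m 1 =
        (P.coeff m * (x₁ : ℚ) ^ m 0) * (x₂ : ℚ) ^ m 1 := fun _ => by ring
    rw [esum_congr e1, esum_const_mul, esum_pow]
    ring
  rw [esum_congr h1, esum_sum]
  refine Finset.sum_congr rfl fun m _ => ?_
  rw [esum_const_mul, esum_pow]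

lemma corner_sym (g : ℤ → ℤ → ℚ) (y : ℤ) :
    esum 0 y (fun x₁ => esum (-1) (y - 1) (fun x₂ => g (x₂ + 1) (x₁ - 1))) =
    esum 0 y (fun x₁ => esum (-1) (y - 1) (fun x₂ => g x₁ x₂)) := by
  have c1 : esum 0 y (fun x₁ => esum (-1) (y - 1) (fun x₂ => g (x₂ + 1) (x₁ - 1))) =
      esum (-1) (y - 1) (fun x₂ => esum 0 y (fun x₁ => g (x₂ + 1) (x₁ - 1))) :=
    esum_comm _ _ _ _ _
  have c2 : ∀ x₂ : ℤ, esum 0 y (fun x₁ => g (x₂ + 1) (x₁ - 1)) =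
      esum (-1) (y - 1) (fun v => g (x₂ + 1) v) := by
    intro x₂
    have h := esum_shift 0 y (-1) (fun v => g (x₂ + 1) v)
    have e1 : (0 : ℤ) + -1 = -1 := by ring
    have e2 : y + -1 = y - 1 := by ring
    rw [e1, e2] at h
    rw [← h]
    exact esum_congr fun x₁ => by norm_num [sub_eq_add_neg]
  have c3 : esum (-1) (y - 1) (fun x₂ => esum (-1) (y - 1) (fun v => g (x₂ + 1) v)) =
      esum (-1) (y - 1) (fun v => esum (-1) (y - 1) (fun x₂ => g (x₂ + 1) v)) :=
    esum_comm _ _ _ _ _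
  have c4 : ∀ v : ℤ, esum (-1) (y - 1) (fun x₂ => g (x₂ + 1) v) =
      esum 0 y (fun u => g u v) := by
    intro v
    have h := esum_shift (-1) (y - 1) 1 (fun u => g u v)
    have e1 : (-1 : ℤ) + 1 = 0 := by ring
    have e2 : y - 1 + 1 = y := by ring
    rw [e1, e2] at h
    exact h
  have c5 : esum (-1) (y - 1) (fun v => esum 0 y (fun u => g u v)) =
      esum 0 y (fun u => esum (-1) (y - 1) (fun v => g u v)) :=
    esum_comm _ _ _ _ _
  rw [c1, esum_congr c2, c3, esum_congr c4, c5]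

set_option maxHeartbeats 1000000 in
set_option maxRecDepth 10000 in
/-- If `F(x₁,x₂)` is a polynomial of degree at most `R` in each variable and
`F(x₁,x₂) + F(x₂+1, x₁−1)` has total degree at most `R`, then for fixed integers `a, b`
the function `y ↦ ∑_{x₁=a}^{y} ∑_{x₂=y}^{b} F(x₁,x₂)` agrees with a polynomial in `y`
of degree at most `R+2`. -/
theorem stmt_3 (R : ℕ) (F : MvPolynomial (Fin 2) ℚ)
    (hdeg0 : F.degreeOf 0 ≤ R) (hdeg1 : F.degreeOf 1 ≤ R)
    (hD : (F + MvPolynomial.bind₁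
        (fun i : Fin 2 => if i = 0 then MvPolynomial.X 1 + 1 else MvPolynomial.X 0 - 1) F).totalDegree ≤ R)
    (a b : ℤ) :
    ∃ p : Polynomial ℚ, p.natDegree ≤ R + 2 ∧
      ∀ y : ℤ,
        esum a y (fun x₁ => esum y b (fun x₂ =>
          MvPolynomial.eval (fun i : Fin 2 => if i = 0 then (x₁ : ℚ) else (x₂ : ℚ)) F))
        = p.eval (y : ℚ) := by
  classical
  set D : MvPolynomial (Fin 2) ℚ := F + MvPolynomial.bind₁
      (fun i : Fin 2 => if i = 0 then MvPolynomial.X 1 + 1 else MvPolynomial.X 0 - 1) F with hDdef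
  -- pointwise description of D
  have hDev : ∀ u v : ℚ,
      MvPolynomial.eval (fun i : Fin 2 => if i = 0 then u else v) D =
      MvPolynomial.eval (fun i : Fin 2 => if i = 0 then u else v) F +
      MvPolynomial.eval (fun i : Fin 2 => if i = 0 then v + 1 else u - 1) F := by
    intro u v
    rw [hDdef, map_add]
    congr 1
    have h := MvPolynomial.eval₂Hom_bind₁ (RingHom.id ℚ)
      (fun i : Fin 2 => if i = 0 then u else v)
      (fun i : Fin 2 => if i = 0 then MvPolynomial.X 1 + 1 else MvPolynomial.X 0 - 1) F
    have h2 : (fun i : Fin 2 => MvPolynomial.eval₂Hom (RingHom.id ℚ)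
        (fun i : Fin 2 => if i = 0 then u else v)
        ((fun i : Fin 2 => if i = 0 then MvPolynomial.X 1 + 1 else MvPolynomial.X 0 - 1) i)) =
        (fun i : Fin 2 => if i = 0 then v + 1 else u - 1) := by
      funext i
      fin_cases i <;> simp
    rw [show (MvPolynomial.eval (fun i : Fin 2 => if i = 0 then u else v) : MvPolynomial (Fin 2) ℚ →+* ℚ)
      = MvPolynomial.eval₂Hom (RingHom.id ℚ) (fun i : Fin 2 => if i = 0 then u else v) from rfl] at *
    rw [h, h2]
    rfl
  -- main functions
  set T : ℤ → ℚ := fun y => esum a y (fun x₁ => esum y b (fun x₂ =>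
      MvPolynomial.eval (fun i : Fin 2 => if i = 0 then (x₁ : ℚ) else (x₂ : ℚ)) F)) with hTdef
  set Hf : ℤ → ℚ := fun y => ∑ m ∈ F.support,
      F.coeff m * (qpoly (m 1)).eval (y : ℚ) * (qpoly (m 0)).eval ((y : ℚ) + 1) with hHdef
  set Ef : ℤ → ℚ := fun y => ∑ m ∈ F.support,
      F.coeff m * ((qpoly (m 1)).eval ((b : ℚ) + 1) * ((y : ℚ) + 1) ^ m 0 +
        (qpoly (m 0)).eval (a : ℚ) * (y : ℚ) ^ m 1) with hEdef
  have hT : ∀ y : ℤ, T y = ∑ m ∈ F.support, F.coeff m *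
      ((qpoly (m 1)).eval ((b : ℚ) + 1) - (qpoly (m 1)).eval (y : ℚ)) *
      ((qpoly (m 0)).eval ((y : ℚ) + 1) - (qpoly (m 0)).eval (a : ℚ)) :=
    fun y => double_expand F a y b y
  have hDelta : ∀ y : ℤ, (T (y + 1) + Hf (y + 1)) - (T y + Hf y) = Ef y := by
    intro y
    rw [hT (y + 1), hT y]
    simp only [hHdef, hEdef]
    push_cast
    rw [← Finset.sum_add_distrib, ← Finset.sum_add_distrib, ← Finset.sum_sub_distrib]
    refine Finset.sum_congr rfl fun m _ => ?_
    have e1 := qpoly_delta (m 0) ((y : ℚ) + 1)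
    have e2 := qpoly_delta (m 1) (y : ℚ)
    linear_combination (F.coeff m * (qpoly (m 1)).eval ((b : ℚ) + 1)) * e1 +
      (F.coeff m * (qpoly (m 0)).eval (a : ℚ)) * e2
  have hE : IsPolyLe R Ef := by
    refine ⟨∑ m ∈ F.support, (C (F.coeff m * (qpoly (m 1)).eval ((b : ℚ) + 1)) * (X + C 1) ^ m 0 +
        C (F.coeff m * (qpoly (m 0)).eval (a : ℚ)) * X ^ m 1), ?_, ?_⟩
    · apply natDegree_sum_le_of_forall_le
      intro m hm
      refine le_trans (natDegree_add_le _ _) (max_le ?_ ?_)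
      · refine le_trans (natDegree_C_mul_le _ _) (le_trans natDegree_pow_le ?_)
        rw [natDegree_X_add_C, mul_one]
        exact le_trans (mem_support_deg0 hm) hdeg0
      · refine le_trans (natDegree_C_mul_le _ _) ?_
        rw [natDegree_X_pow]
        exact le_trans (mem_support_deg1 hm) hdeg1
    · intro y
      simp only [hEdef]
      rw [eval_finset_sum]
      refine Finset.sum_congr rfl fun m _ => ?_
      simp only [eval_add, eval_mul, eval_pow, eval_C, eval_X]
      ring
  have hTH : IsPolyLe (R + 1) (fun y => T y + Hf y) := isPolyLe_of_delta hE hDelta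
  -- the corner sum
  set Sf : ℤ → ℚ := fun y => esum 0 y (fun x₁ => esum (-1) (y - 1) (fun x₂ =>
      MvPolynomial.eval (fun i : Fin 2 => if i = 0 then (x₁ : ℚ) else (x₂ : ℚ)) F)) with hSdef
  have hSexpF : ∀ y : ℤ, Sf y = ∑ m ∈ F.support, F.coeff m *
      ((qpoly (m 1)).eval (y : ℚ) - (qpoly (m 1)).eval (-1 : ℚ)) *
      ((qpoly (m 0)).eval ((y : ℚ) + 1) - (qpoly (m 0)).eval (0 : ℚ)) := by
    intro y
    have h := double_expand F 0 (-1) (y - 1) y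
    push_cast at h
    rw [show ((y : ℚ) - 1 + 1) = (y : ℚ) by ring] at h
    exact h
  have hpt2 : ∀ x₁ x₂ : ℤ,
      MvPolynomial.eval (fun i : Fin 2 => if i = 0 then ((x₂ : ℚ) + 1) else ((x₁ : ℚ) - 1)) F =
      MvPolynomial.eval (fun i : Fin 2 => if i = 0 then (((x₂ + 1 : ℤ)) : ℚ) else (((x₁ - 1 : ℤ)) : ℚ)) F := by
    intro x₁ x₂
    have hpt : (fun i : Fin 2 => if i = 0 then ((x₂ : ℚ) + 1) else ((x₁ : ℚ) - 1)) =
        (fun i : Fin 2 => if i = 0 then (((x₂ + 1 : ℤ)) : ℚ) else (((x₁ - 1 : ℤ)) : ℚ)) := by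
      funext i
      by_cases hi : i = 0
      · simp only [if_pos hi]
        push_cast
        ring
      · simp only [if_neg hi]
        push_cast
        ring
    rw [hpt]
  have hA1 : ∀ y : ℤ, esum 0 y (fun x₁ => esum (-1) (y - 1) (fun x₂ =>
      MvPolynomial.eval (fun i : Fin 2 => if i = 0 then (((x₂ + 1 : ℤ)) : ℚ) else (((x₁ - 1 : ℤ)) : ℚ)) F)) = Sf y := by
    intro y
    exact corner_sym (fun u v : ℤ =>
      MvPolynomial.eval (fun i : Fin 2 => if i = 0 then (u : ℚ) else (v : ℚ)) F) y
  have hSD : ∀ y : ℤ, 2 * Sf y = ∑ m ∈ D.support, D.coeff m *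
      ((qpoly (m 1)).eval (y : ℚ) - (qpoly (m 1)).eval (-1 : ℚ)) *
      ((qpoly (m 0)).eval ((y : ℚ) + 1) - (qpoly (m 0)).eval (0 : ℚ)) := by
    intro y
    have hDsum := double_expand D 0 (-1) (y - 1) y
    push_cast at hDsum
    rw [show ((y : ℚ) - 1 + 1) = (y : ℚ) by ring] at hDsum
    have hsplit : esum 0 y (fun x₁ => esum (-1) (y - 1) (fun x₂ =>
        MvPolynomial.eval (fun i : Fin 2 => if i = 0 then (x₁ : ℚ) else (x₂ : ℚ)) D)) =
        Sf y + esum 0 y (fun x₁ => esum (-1) (y - 1) (fun x₂ =>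
          MvPolynomial.eval (fun i : Fin 2 => if i = 0 then (((x₂ + 1 : ℤ)) : ℚ) else (((x₁ - 1 : ℤ)) : ℚ)) F)) := by
      have inner : ∀ x₁ : ℤ, esum (-1) (y - 1) (fun x₂ =>
          MvPolynomial.eval (fun i : Fin 2 => if i = 0 then (x₁ : ℚ) else (x₂ : ℚ)) D) =
          esum (-1) (y - 1) (fun x₂ =>
            MvPolynomial.eval (fun i : Fin 2 => if i = 0 then (x₁ : ℚ) else (x₂ : ℚ)) F) +
          esum (-1) (y - 1) (fun x₂ =>
            MvPolynomial.eval (fun i : Fin 2 => if i = 0 then (((x₂ + 1 : ℤ)) : ℚ) else (((x₁ - 1 : ℤ)) : ℚ)) F) := by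
        intro x₁
        have hh : ∀ x₂ : ℤ,
            MvPolynomial.eval (fun i : Fin 2 => if i = 0 then (x₁ : ℚ) else (x₂ : ℚ)) D =
            MvPolynomial.eval (fun i : Fin 2 => if i = 0 then (x₁ : ℚ) else (x₂ : ℚ)) F +
            MvPolynomial.eval (fun i : Fin 2 => if i = 0 then (((x₂ + 1 : ℤ)) : ℚ) else (((x₁ - 1 : ℤ)) : ℚ)) F := by
          intro x₂
          rw [hDev (x₁ : ℚ) (x₂ : ℚ), hpt2 x₁ x₂]
        rw [esum_congr hh, esum_add]
      rw [esum_congr inner, esum_add, hSdef]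
    rw [hsplit, hA1 y] at hDsum
    rw [two_mul]
    exact hDsum
  have hSpoly : IsPolyLe (R + 2) Sf := by
    refine ⟨C (1/2 : ℚ) * ∑ m ∈ D.support, C (D.coeff m) *
        ((qpoly (m 1)) - C ((qpoly (m 1)).eval (-1 : ℚ))) *
        ((qpoly (m 0)).comp (X + C 1) - C ((qpoly (m 0)).eval (0 : ℚ))), ?_, ?_⟩
    · refine le_trans (natDegree_C_mul_le _ _) ?_
      apply natDegree_sum_le_of_forall_le
      intro m hm
      have htot : m 0 + m 1 ≤ R := le_trans (mem_support_total hm) hD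
      refine le_trans (natDegree_mul_le) ?_
      have h1 : ((C (D.coeff m)) * ((qpoly (m 1)) - C ((qpoly (m 1)).eval (-1 : ℚ)))).natDegree ≤ m 1 + 1 := by
        refine le_trans (natDegree_mul_le) ?_
        simp only [natDegree_C, zero_add]
        exact le_trans (natDegree_sub_le _ _) (by simp [qpoly_natDegree])
      have h2 : ((qpoly (m 0)).comp (X + C 1) - C ((qpoly (m 0)).eval (0 : ℚ))).natDegree ≤ m 0 + 1 := by
        refine le_trans (natDegree_sub_le _ _) (max_le ?_ (by simp))
        refine le_trans (natDegree_comp_le) ?_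
        rw [natDegree_X_add_C, mul_one]
        exact qpoly_natDegree (m 0)
      omega
    · intro y
      have h := hSD y
      rw [eval_mul, eval_C, eval_finset_sum]
      have h2 : ∑ m ∈ D.support, (C (D.coeff m) *
          ((qpoly (m 1)) - C ((qpoly (m 1)).eval (-1 : ℚ))) *
          ((qpoly (m 0)).comp (X + C 1) - C ((qpoly (m 0)).eval (0 : ℚ)))).eval (y : ℚ) =
          ∑ m ∈ D.support, D.coeff m *
            ((qpoly (m 1)).eval (y : ℚ) - (qpoly (m 1)).eval (-1 : ℚ)) *
            ((qpoly (m 0)).eval ((y : ℚ) + 1) - (qpoly (m 0)).eval (0 : ℚ)) := by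
        refine Finset.sum_congr rfl fun m _ => ?_
        simp only [eval_mul, eval_sub, eval_C, eval_comp, eval_add, eval_X, eval_one]
      rw [h2, ← h]
      ring
  have hCorr : IsPolyLe (R + 1) (fun y => Hf y - Sf y) := by
    refine ⟨∑ m ∈ F.support, (C (F.coeff m * (qpoly (m 1)).eval (-1 : ℚ)) * (qpoly (m 0)).comp (X + C 1)
        + C (F.coeff m * (qpoly (m 0)).eval (0 : ℚ)) * (qpoly (m 1))
        - C (F.coeff m * (qpoly (m 1)).eval (-1 : ℚ) * (qpoly (m 0)).eval (0 : ℚ))), ?_, ?_⟩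
    · apply natDegree_sum_le_of_forall_le
      intro m hm
      have h0 : m 0 ≤ R := le_trans (mem_support_deg0 hm) hdeg0
      have h1 : m 1 ≤ R := le_trans (mem_support_deg1 hm) hdeg1
      refine le_trans (natDegree_sub_le _ _) (max_le (le_trans (natDegree_add_le _ _) (max_le ?_ ?_)) ?_)
      · refine le_trans (natDegree_C_mul_le _ _) ?_
        refine le_trans (natDegree_comp_le) ?_
        rw [natDegree_X_add_C, mul_one]
        exact le_trans (qpoly_natDegree (m 0)) (by omega)
      · refine le_trans (natDegree_C_mul_le _ _) ?_
        exact le_trans (qpoly_natDegree (m 1)) (by omega)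
      · exact le_trans (natDegree_C _).le (by omega)
    · intro y
      simp only [hHdef]
      rw [hSexpF y, eval_finset_sum, ← Finset.sum_sub_distrib]
      refine Finset.sum_congr rfl fun m _ => ?_
      simp only [eval_sub, eval_add, eval_mul, eval_C, eval_comp, eval_X, eval_one]
      ring
  have hHpoly : IsPolyLe (R + 2) Hf :=
    IsPolyLe.congr ((hCorr.mono (by omega)).add hSpoly) (fun y => by ring)
  have hTpoly : IsPolyLe (R + 2) T :=
    IsPolyLe.congr ((hTH.mono (by omega)).sub hHpoly) (fun y => by ring)
  obtain ⟨p, hp, hpe⟩ := hTpoly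
  exact ⟨p, hp, fun y => hpe y⟩
end

section
/- The number of semistandard Young tableaux of shape λ = (λ₁ ≥ λ₂ ≥ … ≥ λ_k ≥ 0) with entries in {1,…,k} equals ∏_{1 ≤ i < j ≤ k} (λ_i − λ_j + j − i)/(j − i). -/
/-- `T` is a semistandard Young tableau of shape `lam` with entries in `{1,…,k}`:
cells are `(i,j)` with `j < lam i` (0-based), rows weakly increase, columns strictly
increase, entries outside the shape are `0`. -/
def IsSSYT (k : ℕ) (lam : ℕ → ℕ) (T : ℕ → ℕ → ℕ) : Prop :=
  (∀ i j, j < lam i → 1 ≤ T i j ∧ T i j ≤ k) ∧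
  (∀ i j, ¬ j < lam i → T i j = 0) ∧
  (∀ i j, j + 1 < lam i → T i j ≤ T i (j + 1)) ∧
  (∀ i j, j < lam (i + 1) → T i j < T (i + 1) j)

namespace SSYT10


open Finset

variable {k m : ℕ} {lam : ℕ → ℕ} {T : ℕ → ℕ → ℕ}

lemma row_mono (h : IsSSYT k lam T) (i : ℕ) :
    ∀ j', j' < lam i → ∀ j, j ≤ j' → T i j ≤ T i j' := by
  intro j'
  induction j' with
  | zero =>
    intro _ j hj
    obtain rfl : j = 0 := Nat.le_zero.mp hj
    exact le_rfl
  | succ n ih =>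
    intro hlt j hj
    rcases Nat.eq_or_lt_of_le hj with rfl | h2
    · exact le_rfl
    · exact (ih (by omega) j (by omega)).trans (h.2.2.1 i n hlt)

lemma col_lb (h : IsSSYT k lam T) (hlam : Antitone lam) :
    ∀ i j, j < lam i → i + 1 ≤ T i j := by
  intro i
  induction i with
  | zero => intro j hj; exact (h.1 0 j hj).1
  | succ n ih =>
    intro j hj
    have hj' : j < lam n := lt_of_lt_of_le hj (hlam (Nat.le_succ n))
    have h1 := h.2.2.2 n j hj
    have h2 := ih j hj'
    omega

lemma val_le (h : IsSSYT k lam T) (i j : ℕ) : T i j ≤ k := by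
  by_cases hj : j < lam i
  · exact (h.1 i j hj).2
  · simp [h.2.1 i j hj]

lemma ssyt_finite (k K L : ℕ) (lam : ℕ → ℕ) (hK : ∀ i, K ≤ i → lam i = 0)
    (hL : ∀ i, lam i ≤ L) : Finite {T : ℕ → ℕ → ℕ // IsSSYT k lam T} := by
  have hinj : Function.Injective (fun (T : {T : ℕ → ℕ → ℕ // IsSSYT k lam T}) =>
      (fun p : Fin K × Fin L =>
        (⟨T.1 p.1 p.2, Nat.lt_succ_of_le (val_le T.2 p.1 p.2)⟩ : Fin (k+1)))) := by
    intro T1 T2 hf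
    apply Subtype.ext; funext i j
    by_cases hj : j < lam i
    · have hi : i < K := by
        by_contra hi
        have := hK i (by omega); omega
      have hjL : j < L := lt_of_lt_of_le hj (hL i)
      have := congrArg Fin.val (congrFun hf (⟨i, hi⟩, ⟨j, hjL⟩))
      exact this
    · rw [T1.2.2.1 i j hj, T2.2.2.1 i j hj]
  exact Finite.of_injective _ hinj



open Finset


/-- interlacing partition as function on ℕ -/
def muOf (m : ℕ) (r : Fin m → ℕ) : ℕ → ℕ := fun i => if h : i < m then r ⟨i, h⟩ else 0

/-- the length of the part of row `i` with entries `≤ m` -/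
def muT (lam : ℕ → ℕ) (m : ℕ) (T : ℕ → ℕ → ℕ) (i : ℕ) : ℕ :=
  Nat.find (⟨lam i, Or.inl le_rfl⟩ : ∃ j, lam i ≤ j ∨ m < T i j)

variable {m : ℕ} {lam : ℕ → ℕ} {T T' : ℕ → ℕ → ℕ}

lemma muT_le (i : ℕ) : muT lam m T i ≤ lam i :=
  Nat.find_le (Or.inl le_rfl)

lemma lt_muT {i j : ℕ} (hj : j < muT lam m T i) : j < lam i ∧ T i j ≤ m := by
  have := Nat.find_min (⟨lam i, Or.inl le_rfl⟩ : ∃ j, lam i ≤ j ∨ m < T i j) hj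
  push_neg at this
  exact ⟨by omega, by omega⟩

lemma muT_ge (hT : IsSSYT (m+1) lam T) {i j : ℕ} (hji : muT lam m T i ≤ j)
    (hj : j < lam i) : T i j = m + 1 := by
  have hspec : lam i ≤ muT lam m T i ∨ m < T i (muT lam m T i) :=
    Nat.find_spec (⟨lam i, Or.inl le_rfl⟩ : ∃ j, lam i ≤ j ∨ m < T i j)
  rcases hspec with h1 | h2
  · omega
  · have hmono := row_mono hT i j hj (muT lam m T i) hji
    have := (hT.1 i j hj).2
    omega

lemma lam_succ_le_muT (hT : IsSSYT (m+1) lam T) (hlam : Antitone lam) (i : ℕ) :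
    lam (i + 1) ≤ muT lam m T i := by
  by_contra hcon
  push_neg at hcon
  have hlt : muT lam m T i < lam i := lt_of_lt_of_le hcon (hlam (Nat.le_succ i))
  have h1 := muT_ge hT le_rfl hlt
  have h2 := hT.2.2.2 i (muT lam m T i) hcon
  have h3 : T (i+1) (muT lam m T i) ≤ m + 1 := by
    have := lt_of_lt_of_le hcon (le_refl (lam (i+1)))
    exact (hT.1 (i+1) _ this).2
  omega

lemma muT_eq_zero (hT : IsSSYT (m+1) lam T) (hlam : Antitone lam) {i : ℕ} (him : m ≤ i) :
    muT lam m T i = 0 := by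
  have : lam i ≤ 0 ∨ m < T i 0 := by
    by_cases h0 : 0 < lam i
    · exact Or.inr (by have := col_lb hT hlam i 0 h0; omega)
    · exact Or.inl (by omega)
  exact Nat.le_zero.mp (Nat.find_le this)

lemma muOf_muT (hT : IsSSYT (m+1) lam T) (hlam : Antitone lam) :
    muOf m (fun i : Fin m => muT lam m T ↑i) = muT lam m T := by
  funext i
  unfold muOf
  split
  · rfl
  · exact (muT_eq_zero hT hlam (by omega)).symm

lemma restrict_ssyt (hT : IsSSYT (m+1) lam T) (hlam : Antitone lam) :
    IsSSYT m (muT lam m T) (fun i j => if j < muT lam m T i then T i j else 0) := by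
  refine ⟨?_, ?_, ?_, ?_⟩
  · intro i j hj
    obtain ⟨h1, h2⟩ := lt_muT hj
    simp only [if_pos hj]
    exact ⟨(hT.1 i j h1).1, h2⟩
  · intro i j hj
    simp only [if_neg hj]
  · intro i j hj
    have hj1 : j < muT lam m T i := by omega
    simp only [if_pos hj, if_pos hj1]
    exact hT.2.2.1 i j (by have := (lt_muT hj).1; omega)
  · intro i j hj
    have h2 : j < lam (i+1) := (lt_muT hj).1
    have h3 : j < muT lam m T i := lt_of_lt_of_le h2 (lam_succ_le_muT hT hlam i)
    simp only [if_pos hj, if_pos h3]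
    exact hT.2.2.2 i j h2

section backward

variable {r : Fin m → ℕ}

lemma mu_le_lam (hr : ∀ i : Fin m, lam (↑i + 1) ≤ r i ∧ r i ≤ lam ↑i) (i : ℕ) : muOf m r i ≤ lam i := by
  unfold muOf; split
  · exact (hr ⟨i, by omega⟩).2
  · omega

lemma lam_succ_le_mu (hz : ∀ i, m + 1 ≤ i → lam i = 0)
    (hr : ∀ i : Fin m, lam (↑i + 1) ≤ r i ∧ r i ≤ lam ↑i) (i : ℕ) : lam (i + 1) ≤ muOf m r i := by
  unfold muOf; split
  · exact (hr ⟨i, by omega⟩).1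
  · rename_i h; rw [hz (i+1) (by omega)]

/-- reconstructed big tableau -/
def buildT (m : ℕ) (lam : ℕ → ℕ) (mu : ℕ → ℕ) (T' : ℕ → ℕ → ℕ) : ℕ → ℕ → ℕ :=
  fun i j => if j < mu i then T' i j else if j < lam i then m + 1 else 0

lemma build_ssyt (hz : ∀ i, m + 1 ≤ i → lam i = 0)
    (hr : ∀ i : Fin m, lam (↑i + 1) ≤ r i ∧ r i ≤ lam ↑i) (hT' : IsSSYT m (muOf m r) T') :
    IsSSYT (m+1) lam (buildT m lam (muOf m r) T') := by
  set mu := muOf m r with hmu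
  have hml : ∀ i, mu i ≤ lam i := mu_le_lam hr
  have hlm : ∀ i, lam (i+1) ≤ mu i := lam_succ_le_mu hz hr
  refine ⟨?_, ?_, ?_, ?_⟩
  · intro i j hj
    unfold buildT
    by_cases h : j < mu i
    · rw [if_pos h]
      obtain ⟨a, b⟩ := hT'.1 i j h
      exact ⟨a, by omega⟩
    · rw [if_neg h, if_pos hj]
      omega
  · intro i j hj
    unfold buildT
    rw [if_neg (by have := hml i; omega), if_neg hj]
  · intro i j hj
    unfold buildT
    by_cases h1 : j + 1 < mu i
    · rw [if_pos h1, if_pos (show j < mu i by omega)]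
      exact hT'.2.2.1 i j h1
    · rw [if_neg h1, if_pos hj]
      by_cases h2 : j < mu i
      · rw [if_pos h2]
        have := (hT'.1 i j h2).2; omega
      · rw [if_neg h2, if_pos (show j < lam i by omega)]
  · intro i j hj
    unfold buildT
    have hjmui : j < mu i := lt_of_lt_of_le hj (hlm i)
    rw [if_pos hjmui]
    by_cases h1 : j < mu (i+1)
    · rw [if_pos h1]
      exact hT'.2.2.2 i j h1
    · rw [if_neg h1, if_pos hj]
      have := (hT'.1 i j hjmui).2; omega

lemma muT_buildT (hr : ∀ i : Fin m, lam (↑i + 1) ≤ r i ∧ r i ≤ lam ↑i)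
    (hT' : IsSSYT m (muOf m r) T') :
    muT lam m (buildT m lam (muOf m r) T') = muOf m r := by
  funext i
  set mu := muOf m r with hmu
  have hml : ∀ i, mu i ≤ lam i := mu_le_lam hr
  unfold muT
  rw [Nat.find_eq_iff]
  constructor
  · by_cases h1 : mu i < lam i
    · refine Or.inr ?_
      unfold buildT
      rw [if_neg (by omega), if_pos h1]; omega
    · exact Or.inl (by have := hml i; omega)
  · intro j hj
    push_neg
    refine ⟨by have := hml i; omega, ?_⟩
    unfold buildT
    rw [if_pos hj]
    exact (hT'.1 i j hj).2

end backward

lemma buildT_restrict (hT : IsSSYT (m+1) lam T) :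
    buildT m lam (muT lam m T) (fun i j => if j < muT lam m T i then T i j else 0) = T := by
  funext i j
  simp only [buildT]
  by_cases h1 : j < muT lam m T i
  · rw [if_pos h1, if_pos h1]
  · rw [if_neg h1]
    by_cases h2 : j < lam i
    · rw [if_pos h2, muT_ge hT (by omega) h2]
    · rw [if_neg h2, (hT.2.1 i j h2)]

variable (m lam) in
/-- the branching equivalence -/
noncomputable def branchEquiv (hlam : Antitone lam) (hz : ∀ i, m + 1 ≤ i → lam i = 0) :
    {T : ℕ → ℕ → ℕ // IsSSYT (m+1) lam T} ≃
      Σ r : ↥(Fintype.piFinset fun i : Fin m => Finset.Icc (lam (↑i+1)) (lam ↑i)),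
        {T' : ℕ → ℕ → ℕ // IsSSYT m (muOf m ↑r) T'} where
  toFun T :=
    ⟨⟨fun i => muT lam m T.1 ↑i, by
        rw [Fintype.mem_piFinset]
        intro i
        rw [Finset.mem_Icc]
        exact ⟨lam_succ_le_muT T.2 hlam ↑i, muT_le ↑i⟩⟩,
      ⟨fun i j => if j < muT lam m T.1 i then T.1 i j else 0, by
        rw [muOf_muT T.2 hlam]
        exact restrict_ssyt T.2 hlam⟩⟩
  invFun p :=
    ⟨buildT m lam (muOf m p.1.1) p.2.1, by
      refine build_ssyt hz ?_ p.2.2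
      intro i
      have := Fintype.mem_piFinset.mp p.1.2 i
      rw [Finset.mem_Icc] at this
      exact this⟩
  left_inv T := by
    apply Subtype.ext
    simp only
    rw [muOf_muT T.2 hlam]
    exact buildT_restrict T.2
  right_inv p := by
    obtain ⟨⟨r, hrmem⟩, ⟨T', hT'⟩⟩ := p
    have hr : ∀ i : Fin m, lam (↑i + 1) ≤ r i ∧ r i ≤ lam ↑i := by
      intro i
      have := Fintype.mem_piFinset.mp hrmem i
      rwa [Finset.mem_Icc] at this
    have hmu : muT lam m (buildT m lam (muOf m r) T') = muOf m r := muT_buildT hr hT'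
    have hfst : (fun i : Fin m => muT lam m (buildT m lam (muOf m r) T') ↑i) = r := by
      funext i
      rw [hmu]
      unfold muOf
      rw [dif_pos i.2]
    refine Sigma.ext (Subtype.ext hfst) ?_
    refine (Subtype.heq_iff_coe_eq ?_).mpr ?_
    · intro x
      rw [show muOf m (fun i : Fin m => muT lam m (buildT m lam (muOf m r) T') ↑i) = muOf m r by
        rw [hfst]]
    · funext i j
      simp only
      rw [hmu]
      by_cases h1 : j < muOf m r i
      · simp only [buildT]
        rw [if_pos h1, if_pos h1]
      · rw [if_neg h1, (hT'.2.1 i j h1)]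


lemma nat_card_sigma {ι : Type*} (s : Finset ι) (g : ι → Type*) [∀ r, Finite (g r)] :
    Nat.card (Σ r : ↥s, g ↑r) = ∑ r ∈ s, Nat.card (g r) := by
  letI : ∀ r : ↥s, Fintype (g ↑r) := fun r => Fintype.ofFinite _
  rw [Nat.card_eq_fintype_card, Fintype.card_sigma,
    ← Finset.sum_coe_sort s (fun r => Nat.card (g r))]
  exact Finset.sum_congr rfl fun i _ => by rw [Nat.card_eq_fintype_card]

set_option maxHeartbeats 1000000 in
lemma card_step (m : ℕ) (lam : ℕ → ℕ) (hlam : Antitone lam)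
    (hz : ∀ i, m + 1 ≤ i → lam i = 0) :
    Nat.card {T : ℕ → ℕ → ℕ // IsSSYT (m+1) lam T}
      = ∑ r ∈ Fintype.piFinset (fun i : Fin m => Finset.Icc (lam (↑i+1)) (lam ↑i)),
          Nat.card {T' : ℕ → ℕ → ℕ // IsSSYT m (muOf m r) T'} := by
  haveI hfin : ∀ r : Fin m → ℕ, Finite {T' : ℕ → ℕ → ℕ // IsSSYT m (muOf m r) T'} := by
    intro r
    refine ssyt_finite m m (muOf m r 0 + (∑ i : Fin m, r i)) (muOf m r) ?_ ?_
    · intro i hi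
      unfold muOf
      rw [dif_neg (by omega)]
    · intro i
      unfold muOf
      split
      · rename_i h
        calc r ⟨i, h⟩ ≤ ∑ i : Fin m, r i := Finset.single_le_sum (f := fun i : Fin m => r i) (fun _ _ => Nat.zero_le _) (Finset.mem_univ _)
        _ ≤ _ := Nat.le_add_left _ _
      · omega
  have h1 := Nat.card_congr (branchEquiv m lam hlam hz)
  have h2 := nat_card_sigma (Fintype.piFinset fun i : Fin m => Finset.Icc (lam (↑i+1)) (lam ↑i))
    (fun r => {T' : ℕ → ℕ → ℕ // IsSSYT m (muOf m r) T'})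
  rw [h1, h2]



open Finset

lemma choose_Ico (u v j : ℕ) (h : u ≤ v) :
    Nat.choose u (j+1) + ∑ b ∈ Ico u v, Nat.choose b j = Nat.choose v (j+1) := by
  induction v, h using Nat.le_induction with
  | base => simp
  | succ n hn ih =>
    rw [Finset.sum_Ico_succ_top hn, ← Nat.add_assoc, ih, Nat.choose_succ_succ']
    omega

lemma choose_Ico_q (u v j : ℕ) (h : u ≤ v) :
    (Nat.choose v (j+1) : ℚ) - Nat.choose u (j+1) = ∑ b ∈ Ico u v, (Nat.choose b j : ℚ) := by
  have := choose_Ico u v j h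
  have hc := congrArg (fun x : ℕ => (x : ℚ)) this
  push_cast at hc
  linarith

lemma vandermonde_eq_detC (n : ℕ) (b : Fin n → ℕ) :
    (Matrix.vandermonde fun i : Fin n => (b i : ℚ)).det
      = (∏ j : Fin n, (Nat.factorial j : ℚ))
        * (Matrix.of fun i j : Fin n => (Nat.choose (b i) j : ℚ)).det := by
  rw [Matrix.det_eval_matrixOfPolynomials_eq_det_vandermonde (fun i => (b i : ℚ))
    (fun j => descPochhammer ℚ j) (fun i => descPochhammer_natDegree ℚ (i : ℕ))
    (fun i => monic_descPochhammer ℚ i)]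
  have heq : (Matrix.of fun (i j : Fin n) => ((descPochhammer ℚ (j : ℕ)).eval ((b i : ℚ))))
      = Matrix.of fun (i j : Fin n) =>
          (Nat.factorial j : ℚ) * (Nat.choose (b i) j : ℚ) := by
    ext i j
    simp only [Matrix.of_apply]
    rw [descPochhammer_eval_eq_descFactorial]
    exact_mod_cast congrArg (Nat.cast : ℕ → ℚ) (Nat.descFactorial_eq_factorial_mul_choose _ _)
  rw [heq]
  exact Matrix.det_mul_row (fun j : Fin n => (Nat.factorial j : ℚ)) (fun i j => (Nat.choose (b i) j : ℚ))

lemma telescope (f : ℕ → ℚ) (a b : ℕ) (h : a ≤ b) :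
    ∑ t ∈ Ico a b, (f t - f (t+1)) = f a - f b := by
  induction b, h using Nat.le_induction with
  | base => simp
  | succ n hn ih => rw [Finset.sum_Ico_succ_top hn, ih]; ring

lemma detC_step (m : ℕ) (a : Fin (m+1) → ℕ) (ha : ∀ i : Fin m, a i.succ ≤ a i.castSucc) :
    (Matrix.of fun i j : Fin (m+1) => (Nat.choose (a i) j : ℚ)).det
      = (-1)^m * ∑ b ∈ Fintype.piFinset (fun i : Fin m => Finset.Ico (a i.succ) (a i.castSucc)),
          (Matrix.of fun i j : Fin m => (Nat.choose (b i) j : ℚ)).det := by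
  classical
  set g : ℕ → Fin (m+1) → ℚ :=
    fun t j => if h : t < m+1 then (Nat.choose (a ⟨t, h⟩) j : ℚ) else 0 with hg
  set M' : Matrix (Fin (m+1)) (Fin (m+1)) ℚ :=
    Matrix.of fun i j => g i.1 j - g (i.1+1) j with hM'
  set L : Matrix (Fin (m+1)) (Fin (m+1)) ℚ :=
    Matrix.of fun i t => if i ≤ t then (1:ℚ) else 0 with hL
  -- step 1 : M = L * M'
  have hfac : (Matrix.of fun i j : Fin (m+1) => (Nat.choose (a i) j : ℚ)) = L * M' := by
    ext i j
    rw [Matrix.mul_apply]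
    have hsum : ∀ t : Fin (m+1),
        L i t * M' t j
          = (fun t : ℕ => (if i.1 ≤ t then (1:ℚ) else 0) * (g t j - g (t+1) j)) t.1 := by
      intro t
      simp only [hL, hM', Matrix.of_apply]
      by_cases hit : (i : ℕ) ≤ (t : ℕ)
      · rw [if_pos hit, if_pos (Fin.le_def.mpr hit)]
      · rw [if_neg hit, if_neg (fun h => hit (Fin.le_def.mp h))]
    symm
    calc ∑ t : Fin (m+1), L i t * M' t j
        = ∑ t ∈ Finset.range (m+1),
            (if i.1 ≤ t then (1:ℚ) else 0) * (g t j - g (t+1) j) := by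
          rw [Finset.sum_congr rfl fun t _ => hsum t]
          exact Fin.sum_univ_eq_sum_range
            (fun t => (if (i:ℕ) ≤ t then (1:ℚ) else 0) * (g t j - g (t+1) j)) (m+1)
      _ = ∑ t ∈ Ico i.1 (m+1), (g t j - g (t+1) j) := by
          rw [Finset.range_eq_Ico, ← Finset.sum_Ico_consecutive _ (Nat.zero_le i.1)
            (Nat.le_of_lt i.2)]
          rw [Finset.sum_eq_zero (fun t ht => by
            rw [if_neg (by simp at ht; omega)]; ring), zero_add]
          exact Finset.sum_congr rfl fun t ht => by
            rw [if_pos (by simp at ht; omega), one_mul]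
      _ = g i.1 j - g (m+1) j := telescope _ _ _ (Nat.le_of_lt i.2)
      _ = (Nat.choose (a i) j : ℚ) := by
          simp only [hg]
          rw [dif_pos i.2, dif_neg (by omega), sub_zero, Fin.eta]
  have hdetL : L.det = 1 := by
    have htri : L.BlockTriangular id := by
      intro i j hij
      simp only [hL, Matrix.of_apply, id] at hij ⊢
      rw [if_neg (by exact not_le.mpr hij)]
    rw [Matrix.det_of_upperTriangular htri]
    simp [hL]
  have hdet1 : (Matrix.of fun i j : Fin (m+1) => (Nat.choose (a i) j : ℚ)).det = M'.det := by
    rw [hfac, Matrix.det_mul, hdetL, one_mul]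
  -- step 3 : expand along column zero
  have hcol : ∀ i : Fin (m+1), i ≠ Fin.last m → M' i 0 = 0 := by
    intro i hi
    have h1 : i.1 < m := by
      have := i.2
      have : i.1 ≠ m := fun h => hi (Fin.ext h)
      omega
    simp only [hM', Matrix.of_apply, hg]
    rw [dif_pos i.2, dif_pos (by omega)]
    simp
  have hlast : M' (Fin.last m) 0 = 1 := by
    simp only [hM', Matrix.of_apply, hg]
    rw [dif_pos (Fin.last m).2, dif_neg (by simp [Fin.last]), sub_zero]
    simp
  have hexp : M'.det = (-1)^m *
      (M'.submatrix (Fin.last m).succAbove Fin.succ).det := by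
    rw [Matrix.det_succ_column_zero]
    rw [Finset.sum_eq_single (Fin.last m)]
    · rw [hlast, mul_one, Fin.val_last]
    · intro i _ hi
      rw [hcol i hi]; ring
    · intro h; exact absurd (Finset.mem_univ _) h
  -- step 4 : identify the submatrix
  have hsub : M'.submatrix (Fin.last m).succAbove Fin.succ
      = Matrix.of fun i j : Fin m =>
          ∑ b ∈ Ico (a i.succ) (a i.castSucc), (Nat.choose b j : ℚ) := by
    ext i j
    rw [Matrix.submatrix_apply, Fin.succAbove_last]
    simp only [hM', Matrix.of_apply, hg, Fin.coe_castSucc, Fin.val_succ]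
    have h1 : i.1 < m + 1 := by omega
    have h2 : i.1 + 1 < m + 1 := by omega
    rw [dif_pos h1, dif_pos h2]
    have e1 : (⟨i.1, h1⟩ : Fin (m+1)) = i.castSucc := rfl
    have e2 : (⟨i.1+1, h2⟩ : Fin (m+1)) = i.succ := rfl
    rw [e1, e2]
    exact choose_Ico_q _ _ _ (ha i)
  -- step 5 : multilinear expansion
  have hmulti : (Matrix.of fun i j : Fin m =>
        ∑ b ∈ Ico (a i.succ) (a i.castSucc), (Nat.choose b j : ℚ)).det
      = ∑ b ∈ Fintype.piFinset (fun i : Fin m => Finset.Ico (a i.succ) (a i.castSucc)),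
          (Matrix.of fun i j : Fin m => (Nat.choose (b i) j : ℚ)).det := by
    have hrows : (Matrix.of fun i j : Fin m =>
        ∑ b ∈ Ico (a i.succ) (a i.castSucc), (Nat.choose b j : ℚ))
        = fun i : Fin m => ∑ b ∈ Ico (a i.succ) (a i.castSucc),
            (fun j : Fin m => (Nat.choose b (j : ℕ) : ℚ)) := by
      funext i j
      rw [Finset.sum_apply]
      rfl
    show Matrix.detRowAlternating _ = _
    rw [hrows]
    exact (Matrix.detRowAlternating :
      (Fin m → ℚ) [⋀^Fin m]→ₗ[ℚ] ℚ).toMultilinearMap.map_sum_finset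
        (fun i b => fun j => (Nat.choose b j : ℚ))
        (fun i => Finset.Ico (a i.succ) (a i.castSucc))
  rw [hdet1, hexp, hsub, hmulti]

lemma central (m : ℕ) (a : Fin (m+1) → ℕ) (ha : ∀ i : Fin m, a i.succ ≤ a i.castSucc) :
    ∑ b ∈ Fintype.piFinset (fun i : Fin m => Finset.Ico (a i.succ) (a i.castSucc)),
        (Matrix.vandermonde fun i : Fin m => (b i : ℚ)).det
      = (-1)^m * (Matrix.vandermonde fun i : Fin (m+1) => (a i : ℚ)).det
          / (Nat.factorial m : ℚ) := by
  have hPm1 : (∏ j : Fin (m+1), (Nat.factorial (j:ℕ) : ℚ))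
      = (∏ j : Fin m, (Nat.factorial (j:ℕ) : ℚ)) * (Nat.factorial m : ℚ) := by
    rw [Fin.prod_univ_castSucc]
    rfl
  have hm : (Nat.factorial m : ℚ) ≠ 0 := Nat.cast_ne_zero.mpr (Nat.factorial_ne_zero _)
  have hsum : ∑ b ∈ Fintype.piFinset (fun i : Fin m => Finset.Ico (a i.succ) (a i.castSucc)),
        (Matrix.vandermonde fun i : Fin m => (b i : ℚ)).det
      = (∏ j : Fin m, (Nat.factorial (j:ℕ) : ℚ)) *
        ∑ b ∈ Fintype.piFinset (fun i : Fin m => Finset.Ico (a i.succ) (a i.castSucc)),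
          (Matrix.of fun i j : Fin m => (Nat.choose (b i) j : ℚ)).det := by
    rw [Finset.mul_sum]
    exact Finset.sum_congr rfl fun b _ => vandermonde_eq_detC m b
  have hstep := detC_step m a ha
  have hA := vandermonde_eq_detC (m+1) a
  rw [hsum, hA, hstep, hPm1]
  have hsgn : ((-1:ℚ))^m * (-1)^m = 1 := by
    rw [← pow_add, ← two_mul, pow_mul]
    norm_num
  rw [eq_div_iff hm]
  linear_combination -((∏ j : Fin m, (Nat.factorial (j:ℕ) : ℚ)) * (Nat.factorial m : ℚ) *
    (∑ b ∈ Fintype.piFinset (fun i : Fin m => Finset.Ico (a i.succ) (a i.castSucc)),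
      (Matrix.of fun i j : Fin m => (Nat.choose (b i) j : ℚ)).det)) * hsgn



open Finset

lemma prod_pairs (n : ℕ) (f : ℕ × ℕ → ℚ) :
    ∏ p ∈ (Finset.range n ×ˢ Finset.range n).filter (fun p => p.1 < p.2), f p
      = ∏ i : Fin n, ∏ j ∈ Finset.Ioi i, f (↑i, ↑j) := by
  rw [Finset.prod_filter, Finset.prod_product]
  rw [← Fin.prod_univ_eq_prod_range
    (fun i => ∏ j ∈ Finset.range n, if i < j then f (i, j) else 1) n]
  refine Finset.prod_congr rfl fun i _ => ?_
  rw [← Finset.prod_filter]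
  have hset : (Finset.range n).filter (fun j => (i:ℕ) < j) = Finset.Ioc (i:ℕ) (n-1) := by
    ext x
    simp only [Finset.mem_filter, Finset.mem_range, Finset.mem_Ioc]
    have := i.2
    omega
  rw [hset, show Finset.Ioc (i:ℕ) (n-1) = Finset.Ioo (i:ℕ) n by ext x; simp only [Finset.mem_Ioc, Finset.mem_Ioo]; have := i.2; omega,
    ← Fin.map_valEmbedding_Ioi, Finset.prod_map]
  rfl

lemma eps_eq (n : ℕ) :
    (∏ i : Fin n, ∏ _j ∈ Finset.Ioi i, (-1:ℚ)) = (-1:ℚ)^(∑ i ∈ Finset.range n, i) := by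
  have h1 : ∀ i : Fin n, (∏ _j ∈ Finset.Ioi i, (-1:ℚ)) = (-1:ℚ)^(n - 1 - (i:ℕ)) := by
    intro i
    rw [Finset.prod_const, Fin.card_Ioi]
  rw [Finset.prod_congr rfl fun i _ => h1 i,
    Fin.prod_univ_eq_prod_range (fun i => (-1:ℚ)^(n - 1 - i)) n,
    Finset.prod_range_reflect (fun i => (-1:ℚ)^i) n]
  exact Finset.prod_pow_eq_pow_sum _ _ _

lemma P_to_vand (n : ℕ) (ν : ℕ → ℕ) (w : Fin n → ℕ)
    (hw : ∀ i : Fin n, w i = ν ↑i + (n - 1 - ↑i)) :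
    ∏ p ∈ (Finset.range n ×ˢ Finset.range n).filter (fun p => p.1 < p.2),
        (((ν p.1 : ℚ) - ν p.2 + p.2 - p.1) / ((p.2:ℚ) - p.1))
      = ((-1:ℚ)^(∑ i ∈ Finset.range n, i)
          * (Matrix.vandermonde fun i : Fin n => (w i : ℚ)).det)
        / (Matrix.vandermonde fun i : Fin n => ((i:ℕ) : ℚ)).det := by
  rw [prod_pairs n (fun p => (((ν p.1 : ℚ) - ν p.2 + p.2 - p.1) / ((p.2:ℚ) - p.1))),
    Matrix.det_vandermonde, Matrix.det_vandermonde, ← eps_eq n]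
  rw [← Finset.prod_mul_distrib, ← Finset.prod_div_distrib]
  refine Finset.prod_congr rfl fun i _ => ?_
  rw [← Finset.prod_mul_distrib, ← Finset.prod_div_distrib]
  refine Finset.prod_congr rfl fun j hj => ?_
  have hij : (i:ℕ) < (j:ℕ) := Fin.lt_def.mp (Finset.mem_Ioi.mp hj)
  have hjn : (j:ℕ) < n := j.2
  have e : ∀ t : Fin n, ((w t : ℕ) : ℚ) = (ν ↑t : ℚ) + n - 1 - ↑t := by
    intro t
    rw [hw t]
    have ht : (t:ℕ) < n := t.2
    push_cast [Nat.cast_sub (by omega : (t:ℕ) ≤ n - 1), Nat.cast_sub (by omega : 1 ≤ n)]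
    ring
  rw [e i, e j]
  have hne : ((j:ℕ):ℚ) - ((i:ℕ):ℚ) ≠ 0 := by
    have : ((i:ℕ):ℚ) < ((j:ℕ):ℚ) := by exact_mod_cast hij
    linarith
  field_simp
  ring

lemma vand_id_succ (m : ℕ) :
    (Matrix.vandermonde fun i : Fin (m+1) => ((i:ℕ) : ℚ)).det
      = (Matrix.vandermonde fun i : Fin m => ((i:ℕ) : ℚ)).det * (Nat.factorial m : ℚ) := by
  cases m with
  | zero =>
    simp [Matrix.det_vandermonde]
  | succ t =>
    have h1 := Matrix.det_vandermonde_id_eq_superFactorial (R := ℚ) (t+1)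
    have h2 := Matrix.det_vandermonde_id_eq_superFactorial (R := ℚ) t
    have h3 : (Nat.superFactorial (t+1) : ℚ) = Nat.superFactorial t * (Nat.factorial (t+1) : ℚ) := by
      rw [Nat.superFactorial_succ]
      push_cast
      ring
    rw [show (fun i : Fin (t+1+1) => ((i:ℕ) : ℚ)) = (fun i : Fin (t+1+1) => (i : ℚ)) from rfl]
    rw [show (fun i : Fin (t+1) => ((i:ℕ) : ℚ)) = (fun i : Fin (t+1) => (i : ℚ)) from rfl]
    rw [h1, h2, h3]

lemma vand_id_ne_zero (n : ℕ) :
    (Matrix.vandermonde fun i : Fin n => ((i:ℕ) : ℚ)).det ≠ 0 := by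
  rw [Matrix.det_vandermonde_ne_zero_iff]
  intro i j hij
  have h2 : ((i:ℕ):ℚ) = ((j:ℕ):ℚ) := hij
  exact Fin.ext (by exact_mod_cast h2)


lemma algebra_step (m : ℕ) (lam : ℕ → ℕ) (hlam : Antitone lam) :
    ∑ r ∈ Fintype.piFinset (fun i : Fin m => Finset.Icc (lam (↑i+1)) (lam ↑i)),
        (∏ p ∈ (Finset.range m ×ˢ Finset.range m).filter (fun p => p.1 < p.2),
          (((muOf m r p.1 : ℚ) - muOf m r p.2 + p.2 - p.1) / ((p.2 : ℚ) - p.1)))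
      = ∏ p ∈ (Finset.range (m+1) ×ˢ Finset.range (m+1)).filter (fun p => p.1 < p.2),
          (((lam p.1 : ℚ) - lam p.2 + p.2 - p.1) / ((p.2 : ℚ) - p.1)) := by
  classical
  set a : Fin (m+1) → ℕ := fun i => lam ↑i + (m - ↑i) with ha_def
  have ha : ∀ i : Fin m, a i.succ ≤ a i.castSucc := by
    intro i
    have h1 : lam (↑i + 1) ≤ lam ↑i := hlam (Nat.le_succ _)
    simp only [ha_def, Fin.val_succ, Fin.coe_castSucc]
    have := i.2
    omega
  -- rewrite each summand via P_to_vand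
  have hterm : ∀ r ∈ Fintype.piFinset (fun i : Fin m => Finset.Icc (lam (↑i+1)) (lam ↑i)),
      (∏ p ∈ (Finset.range m ×ˢ Finset.range m).filter (fun p => p.1 < p.2),
          (((muOf m r p.1 : ℚ) - muOf m r p.2 + p.2 - p.1) / ((p.2 : ℚ) - p.1)))
        = ((-1:ℚ)^(∑ i ∈ Finset.range m, i)
            * (Matrix.vandermonde fun i : Fin m => ((r i + (m - 1 - ↑i) : ℕ) : ℚ)).det)
          / (Matrix.vandermonde fun i : Fin m => ((i:ℕ) : ℚ)).det := by
    intro r _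
    have := P_to_vand m (muOf m r) (fun i : Fin m => r i + (m - 1 - ↑i)) ?_
    · exact this
    · intro i
      unfold muOf
      rw [dif_pos i.2]
  rw [Finset.sum_congr rfl hterm]
  -- factor constants out
  have hfac : ∀ r : Fin m → ℕ,
      ((-1:ℚ)^(∑ i ∈ Finset.range m, i)
          * (Matrix.vandermonde fun i : Fin m => ((r i + (m - 1 - ↑i) : ℕ) : ℚ)).det)
        / (Matrix.vandermonde fun i : Fin m => ((i:ℕ) : ℚ)).det
      = ((-1:ℚ)^(∑ i ∈ Finset.range m, i)
            / (Matrix.vandermonde fun i : Fin m => ((i:ℕ) : ℚ)).det)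
          * (Matrix.vandermonde fun i : Fin m => ((r i + (m - 1 - ↑i) : ℕ) : ℚ)).det := by
    intro r; ring
  rw [Finset.sum_congr rfl fun r _ => hfac r, ← Finset.mul_sum]
  -- reindex the sum
  have hre : ∑ r ∈ Fintype.piFinset (fun i : Fin m => Finset.Icc (lam (↑i+1)) (lam ↑i)),
      (Matrix.vandermonde fun i : Fin m => ((r i + (m - 1 - ↑i) : ℕ) : ℚ)).det
      = ∑ b ∈ Fintype.piFinset (fun i : Fin m => Finset.Ico (a i.succ) (a i.castSucc)),
        (Matrix.vandermonde fun i : Fin m => (b i : ℚ)).det := by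
    refine Finset.sum_nbij' (fun r => fun i : Fin m => r i + (m - 1 - ↑i))
      (fun b => fun i : Fin m => b i - (m - 1 - ↑i)) ?_ ?_ ?_ ?_ ?_
    · intro r hr
      rw [Fintype.mem_piFinset] at hr ⊢
      intro i
      have h1 := Finset.mem_Icc.mp (hr i)
      rw [Finset.mem_Ico]
      simp only [ha_def, Fin.val_succ, Fin.coe_castSucc]
      have := i.2
      omega
    · intro b hb
      rw [Fintype.mem_piFinset] at hb ⊢
      intro i
      have h1 := Finset.mem_Ico.mp (hb i)
      simp only [ha_def, Fin.val_succ, Fin.coe_castSucc] at h1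
      rw [Finset.mem_Icc]
      show lam (↑i+1) ≤ b i - (m - 1 - ↑i) ∧ b i - (m - 1 - ↑i) ≤ lam ↑i
      have := i.2
      omega
    · intro r hr
      funext i
      show r i + (m - 1 - ↑i) - (m - 1 - ↑i) = r i
      omega
    · intro b hb
      funext i
      show b i - (m - 1 - ↑i) + (m - 1 - ↑i) = b i
      rw [Fintype.mem_piFinset] at hb
      have h1 := Finset.mem_Ico.mp (hb i)
      simp only [ha_def, Fin.val_succ, Fin.coe_castSucc] at h1
      have := i.2
      omega
    · intro r hr
      rfl
  rw [hre, central m a ha]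
  -- right-hand side via P_to_vand
  have hRHS := P_to_vand (m+1) lam a (by
    intro i
    simp only [ha_def]
    have := i.2
    omega)
  rw [hRHS]
  -- now pure field arithmetic
  have hG : (-1:ℚ)^(∑ i ∈ Finset.range (m+1), i)
      = (-1:ℚ)^(∑ i ∈ Finset.range m, i) * (-1:ℚ)^m := by
    rw [Finset.sum_range_succ, pow_add]
  rw [hG, vand_id_succ m]
  have hD := vand_id_ne_zero m
  have hf : (Nat.factorial m : ℚ) ≠ 0 := Nat.cast_ne_zero.mpr (Nat.factorial_ne_zero _)
  have hsgn : ((-1:ℚ))^m * (-1)^m = 1 := by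
    rw [← pow_add, ← two_mul, pow_mul]
    norm_num
  field_simp


end SSYT10

/-- The number of semistandard Young tableaux of shape `λ = (λ₁ ≥ … ≥ λ_k ≥ 0)` with
entries in `{1,…,k}` equals `∏_{1 ≤ i < j ≤ k} (λ_i − λ_j + j − i)/(j − i)`
(here rows are 0-based). -/
theorem stmt_10 (k : ℕ) (lam : ℕ → ℕ) (hlam : Antitone lam)
    (hzero : ∀ i, k ≤ i → lam i = 0) :
    (Nat.card {T : ℕ → ℕ → ℕ // IsSSYT k lam T} : ℚ)
    = ∏ p ∈ (Finset.range k ×ˢ Finset.range k).filter (fun p => p.1 < p.2),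
        (((lam p.1 : ℚ) - lam p.2 + p.2 - p.1) / ((p.2 : ℚ) - p.1)) := by
  induction k generalizing lam with
  | zero =>
    have h0 : IsSSYT 0 lam (fun _ _ => 0) := by
      refine ⟨?_, fun _ _ _ => rfl, fun _ _ _ => le_rfl, ?_⟩
      · intro i j hj
        rw [hzero i (Nat.zero_le i)] at hj
        omega
      · intro i j hj
        rw [hzero (i+1) (Nat.zero_le _)] at hj
        omega
    haveI : Unique {T : ℕ → ℕ → ℕ // IsSSYT 0 lam T} :=
      { default := ⟨fun _ _ => 0, h0⟩
        uniq := fun T => by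
          apply Subtype.ext
          funext i j
          have := T.2.2.1 i j (by rw [hzero i (Nat.zero_le i)]; omega)
          simpa using this }
    rw [Nat.card_unique]
    simp
  | succ m ih =>
    rw [SSYT10.card_step m lam hlam hzero, Nat.cast_sum]
    have hIH : ∀ r ∈ Fintype.piFinset (fun i : Fin m => Finset.Icc (lam (↑i+1)) (lam ↑i)),
        (Nat.card {T' : ℕ → ℕ → ℕ // IsSSYT m (SSYT10.muOf m r) T'} : ℚ)
          = ∏ p ∈ (Finset.range m ×ˢ Finset.range m).filter (fun p => p.1 < p.2),
              (((SSYT10.muOf m r p.1 : ℚ) - SSYT10.muOf m r p.2 + p.2 - p.1)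
                / ((p.2 : ℚ) - p.1)) := by
      intro r hr
      rw [Fintype.mem_piFinset] at hr
      have hr' : ∀ i : Fin m, lam (↑i + 1) ≤ r i ∧ r i ≤ lam ↑i :=
        fun i => Finset.mem_Icc.mp (hr i)
      refine ih (SSYT10.muOf m r) ?_ ?_
      · apply antitone_nat_of_succ_le
        intro i
        have h1 := SSYT10.mu_le_lam hr' (i+1)
        have h2 := SSYT10.lam_succ_le_mu hzero hr' i
        omega
      · intro i hi
        unfold SSYT10.muOf
        rw [dif_neg (by omega)]
    rw [Finset.sum_congr rfl hIH]
    exact SSYT10.algebra_step m lam hlam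
end

section
/- The number of semistandard Young tableaux of shape λ = (λ₁,…,λ_r) with entries in {1,…,k}, where r ≤ k, equals ∏_{1≤i<j≤r} (λ_i − λ_j + j − i)/(j − i) · ∏_{i=1}^{r} (λ_i + r + 1 − i)_{k−r} / (r + 1 − i)_{k−r}, and equals 0 when r > k and λ_r > 0. -/
open Finset Polynomial
set_option maxHeartbeats 1000000

open Finset

/-- `Wp n f` : Weyl product for first `n` parts. -/
noncomputable def Wp (n : ℕ) (f : ℕ → ℕ) : ℚ :=
  ∏ p ∈ (range n ×ˢ range n).filter (fun p => p.1 < p.2),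
    (((f p.1 : ℚ) - f p.2 + p.2 - p.1) / ((p.2 : ℚ) - p.1))

lemma prodpair_range {M : Type*} [CommMonoid M] (n : ℕ) (g : ℕ × ℕ → M) :
    ∏ p ∈ (range n ×ˢ range n).filter (fun p => p.1 < p.2), g p
      = ∏ i ∈ range n, ∏ j ∈ Ico (i+1) n, g (i, j) := by
  rw [prod_filter, prod_product]
  refine prod_congr rfl fun i hi => ?_
  rw [← prod_filter]
  congr 1
  ext j
  simp only [mem_filter, mem_range, mem_Ico]
  omega

lemma prodpair_fin {M : Type*} [CommMonoid M] (n : ℕ) (g : ℕ → ℕ → M) :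
    (∏ i : Fin n, ∏ j ∈ Ioi i, g i j) = ∏ i ∈ range n, ∏ j ∈ Ico (i+1) n, g i j := by
  rw [← Fin.prod_univ_eq_prod_range (fun i => ∏ j ∈ Ico (i+1) n, g i j)]
  refine prod_congr rfl fun i _ => ?_
  have : (∏ j ∈ Ioi i, g i j) = ∏ j ∈ (Ioi i).map Fin.valEmbedding, g i j := by
    rw [prod_map]; rfl
  rw [this, Fin.map_valEmbedding_Ioi]
  congr 1

/-- denominator product -/
noncomputable def En (n : ℕ) : ℚ := ∏ i ∈ range n, ∏ j ∈ Ico (i+1) n, ((i : ℚ) - j)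

lemma En_ne_zero (n : ℕ) : En n ≠ 0 := by
  refine prod_ne_zero_iff.mpr fun i hi => prod_ne_zero_iff.mpr fun j hj => ?_
  simp only [mem_Ico] at hj
  have : (i : ℚ) < j := by exact_mod_cast hj.1
  intro h
  rw [sub_eq_zero] at h
  exact absurd h (ne_of_lt this)

lemma Wp_mul_En (n : ℕ) (f : ℕ → ℕ) :
    Wp n f * En n
      = (Matrix.vandermonde (fun i : Fin n => (f i : ℚ) + n - 1 - i)).det := by
  rw [Matrix.det_vandermonde, prodpair_fin n
    (fun i j => ((f j : ℚ) + n - 1 - j) - ((f i : ℚ) + n - 1 - i)), Wp,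
    prodpair_range n (fun p => (((f p.1 : ℚ) - f p.2 + p.2 - p.1) / ((p.2 : ℚ) - p.1))),
    En, ← prod_mul_distrib]
  refine prod_congr rfl fun i hi => ?_
  rw [← prod_mul_distrib]
  refine prod_congr rfl fun j hj => ?_
  simp only [mem_Ico, mem_range] at hi hj
  have hne : (i : ℚ) - j ≠ 0 := by
    intro h; rw [sub_eq_zero] at h
    have : (i : ℚ) < j := by exact_mod_cast hj.1
    exact absurd h (ne_of_lt this)
  have hne2 : (j : ℚ) - i ≠ 0 := by
    intro h; rw [sub_eq_zero] at h
    have : (i : ℚ) < j := by exact_mod_cast hj.1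
    exact absurd h.symm (ne_of_lt this)
  field_simp
  ring

lemma prod_sub_cast (k : ℕ) : (∏ i ∈ range k, ((i : ℚ) - k)) = (-1)^k * (k.factorial : ℚ) := by
  have h1 : ∀ i ∈ range k, ((i : ℚ) - k) = (-1) * (((k - i : ℕ) : ℚ)) := by
    intro i hi
    simp only [mem_range] at hi
    rw [Nat.cast_sub (le_of_lt hi)]
    ring
  rw [prod_congr rfl h1, prod_mul_distrib, prod_const, card_range, ← Nat.cast_prod]
  congr 1
  have h2 : ∀ i ∈ range k, k - i = (fun j => j + 1) (k - 1 - i) := by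
    intro i hi; simp only [mem_range] at hi
    show k - i = k - 1 - i + 1
    omega
  rw [prod_congr rfl h2, prod_range_reflect (fun j => j + 1) k,
    prod_range_add_one_eq_factorial]

lemma En_succ (k : ℕ) : En (k+1) = En k * ((-1)^k * (k.factorial : ℚ)) := by
  rw [En, En, prod_range_succ]
  have h2 : (∏ j ∈ Ico (k+1) (k+1), ((k:ℚ) - j)) = 1 := by simp
  rw [h2, mul_one, ← prod_sub_cast, ← prod_mul_distrib]
  refine prod_congr rfl fun i hi => ?_
  simp only [mem_range] at hi
  rw [Finset.prod_Ico_succ_top (by omega : i + 1 ≤ k)]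

-- difference identity for descPochhammer
lemma dp_diff (j : ℕ) (x : ℚ) :
    (descPochhammer ℚ (j+1)).eval (x+1) - (descPochhammer ℚ (j+1)).eval x
      = ((j:ℚ)+1) * (descPochhammer ℚ j).eval x := by
  have h1 : (descPochhammer ℚ (j+1)).eval (x+1) = (x+1) * (descPochhammer ℚ j).eval x := by
    rw [descPochhammer_succ_left, eval_mul, eval_X, eval_comp, eval_sub, eval_X, eval_one,
      add_sub_cancel_right]
  rw [h1, descPochhammer_succ_eval]
  ring

-- telescoping sum
lemma dp_tele (j : ℕ) (c : ℚ) (l u : ℕ) (h : l ≤ u) :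
    ∑ m ∈ Icc l u, (descPochhammer ℚ j).eval ((m:ℚ) + c)
      = ((descPochhammer ℚ (j+1)).eval ((u:ℚ) + 1 + c)
          - (descPochhammer ℚ (j+1)).eval ((l:ℚ) + c)) / ((j:ℚ)+1) := by
  have hj : ((j:ℚ)+1) ≠ 0 := by positivity
  induction u, h using Nat.le_induction with
  | base =>
    rw [Icc_self, sum_singleton, eq_div_iff hj]
    have := dp_diff j ((l:ℚ) + c)
    rw [show (l:ℚ) + c + 1 = (l:ℚ) + 1 + c by ring] at this
    rw [this]; ring
  | succ u hu ih =>
    rw [Finset.sum_Icc_succ_top (by omega : l ≤ u + 1), ih, eq_div_iff hj, add_mul,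
      div_mul_cancel₀ _ hj]
    have h2 := dp_diff j ((u:ℚ) + 1 + c)
    push_cast
    rw [show ((u:ℚ) + 1 + c + 1) = (u:ℚ) + 1 + 1 + c by ring] at h2
    nlinarith [h2]

lemma det_diff (k : ℕ) (A : Fin (k+1) → ℚ) :
    (Matrix.vandermonde A).det
      = (-1)^k * (Matrix.of fun i j : Fin k =>
          (descPochhammer ℚ ((j:ℕ)+1)).eval (A i.castSucc)
            - (descPochhammer ℚ ((j:ℕ)+1)).eval (A i.succ)).det := by
  set P : Matrix (Fin (k+1)) (Fin (k+1)) ℚ :=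
    Matrix.of fun i j => (descPochhammer ℚ (j:ℕ)).eval (A i) with hPdef
  have hP : (Matrix.vandermonde A).det = P.det :=
    Matrix.det_eval_matrixOfPolynomials_eq_det_vandermonde A (fun i => descPochhammer ℚ (i:ℕ))
      (fun i => descPochhammer_natDegree (R := ℚ) _) (fun i => monic_descPochhammer _ _)
  set Q : Matrix (Fin (k+1)) (Fin (k+1)) ℚ :=
    Matrix.of fun i j => Fin.cases (P 0 j) (fun i' => P i'.succ j - P i'.castSucc j) i with hQdef
  have hQ0 : ∀ j, Q 0 j = P 0 j := fun j => by simp [hQdef]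
  have hQs : ∀ (i : Fin k) (j), Q i.succ j = P i.succ j - P i.castSucc j := fun i j => by
    simp [hQdef]
  have hPQ : P.det = Q.det := by
    refine Matrix.det_eq_of_forall_row_eq_smul_add_pred (c := fun _ => 1)
      (fun j => (hQ0 j).symm) (fun i j => ?_)
    rw [hQs i j]; ring
  have hQcol : ∀ i : Fin k, Q i.succ 0 = 0 := by
    intro i
    rw [hQs]
    simp [hPdef, descPochhammer_zero]
  rw [hP, hPQ, Matrix.det_succ_column_zero, Fin.sum_univ_succ]
  have h2 : ∀ i : Fin k, (-1:ℚ)^((i.succ : Fin (k+1)) : ℕ) * Q i.succ 0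
      * (Q.submatrix i.succ.succAbove Fin.succ).det = 0 := by
    intro i; rw [hQcol]; ring
  rw [Finset.sum_congr rfl (fun i _ => h2 i), Finset.sum_const, smul_zero, add_zero]
  have hQ00 : Q 0 0 = 1 := by
    rw [hQ0]; simp [hPdef, descPochhammer_zero]
  rw [hQ00, Fin.succAbove_zero]
  have hsub : Q.submatrix Fin.succ Fin.succ
      = - (Matrix.of fun i j : Fin k =>
          (descPochhammer ℚ ((j:ℕ)+1)).eval (A i.castSucc)
            - (descPochhammer ℚ ((j:ℕ)+1)).eval (A i.succ)) := by
    ext i j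
    simp only [Matrix.submatrix_apply, Matrix.neg_apply, Matrix.of_apply]
    rw [hQs]
    simp [hPdef]
  rw [hsub, Matrix.det_neg]
  simp

def extf (k : ℕ) (μ : Fin k → ℕ) : ℕ → ℕ := fun i => if h : i < k then μ ⟨i, h⟩ else 0

lemma fin_prod_fact (k : ℕ) : (∏ j : Fin k, ((j:ℚ)+1)) = (k.factorial : ℚ) := by
  rw [Fin.prod_univ_eq_prod_range (fun j => ((j:ℚ)+1)) k]
  rw [← prod_range_add_one_eq_factorial, Nat.cast_prod]
  push_cast
  rfl

lemma branch (k : ℕ) (lam : ℕ → ℕ) (hlam : ∀ i, lam (i+1) ≤ lam i) :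
    ∑ μ ∈ Fintype.piFinset (fun i : Fin k => Icc (lam ((i:ℕ)+1)) (lam (i:ℕ))),
        Wp k (extf k μ) = Wp (k+1) lam := by
  have hk0 : (k.factorial : ℚ) ≠ 0 := by exact_mod_cast k.factorial_ne_zero
  refine mul_right_cancel₀ (En_ne_zero k) ?_
  rw [Finset.sum_mul]
  set A : Fin (k+1) → ℚ := fun i => (lam i : ℚ) + k - i with hA
  set g : Fin k → ℕ → (Fin k → ℚ) :=
    fun i m => fun j => (descPochhammer ℚ (j:ℕ)).eval ((m:ℚ) + ((k:ℚ) - 1 - i)) with hg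
  set Afin : Fin k → Finset ℕ := fun i => Icc (lam ((i:ℕ)+1)) (lam (i:ℕ)) with hAfin
  have hbridge : ∀ M : Matrix (Fin k) (Fin k) ℚ,
      (Matrix.detRowAlternating (R:=ℚ) (n:=Fin k)).toMultilinearMap M = M.det := fun _ => rfl
  have step1 : ∀ μ ∈ Fintype.piFinset Afin,
      Wp k (extf k μ) * En k
        = (Matrix.detRowAlternating (R:=ℚ) (n:=Fin k)).toMultilinearMap
            (fun i => g i (μ i)) := by
    intro μ _
    rw [Wp_mul_En k (extf k μ)]
    have hv : (fun i : Fin k => ((extf k μ i : ℚ)) + k - 1 - i)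
        = fun i : Fin k => ((μ i : ℚ)) + k - 1 - i := by
      funext i
      simp [extf, i.isLt]
    rw [hv, Matrix.det_eval_matrixOfPolynomials_eq_det_vandermonde
      (fun i : Fin k => ((μ i : ℚ)) + k - 1 - i) (fun i => descPochhammer ℚ (i:ℕ))
      (fun i => descPochhammer_natDegree (R := ℚ) _) (fun i => monic_descPochhammer _ _)]
    have hM : (Matrix.of fun (i j : Fin k) =>
        (descPochhammer ℚ (j:ℕ)).eval ((μ i : ℚ) + k - 1 - i)) = fun i => g i (μ i) := by
      funext i j
      simp only [Matrix.of_apply, hg]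
      congr 1
      ring
    rw [← hM]
    rfl
  rw [Finset.sum_congr rfl step1,
    ← (Matrix.detRowAlternating : (Fin k → ℚ) [⋀^Fin k]→ₗ[ℚ] ℚ).toMultilinearMap.map_sum_finset
      g Afin]
  have step3 : (fun i => ∑ m ∈ Afin i, g i m)
      = Matrix.of (fun i j : Fin k => (1/((j:ℚ)+1)) *
          ((descPochhammer ℚ ((j:ℕ)+1)).eval (A i.castSucc)
            - (descPochhammer ℚ ((j:ℕ)+1)).eval (A i.succ))) := by
    funext i j
    rw [Finset.sum_apply]
    have := dp_tele (j:ℕ) ((k:ℚ) - 1 - i) (lam ((i:ℕ)+1)) (lam (i:ℕ)) (hlam i)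
    rw [hg]
    simp only []
    rw [this, Matrix.of_apply, one_div_mul_eq_div]
    
    congr 2
    · simp only [hA, Fin.coe_castSucc]
      ring
    · simp only [hA, Fin.val_succ]
      push_cast
      ring
  rw [step3]
  rw [hbridge]
  have step4 : Matrix.det (Matrix.of (fun i j : Fin k => (1/((j:ℚ)+1)) *
          ((descPochhammer ℚ ((j:ℕ)+1)).eval (A i.castSucc)
            - (descPochhammer ℚ ((j:ℕ)+1)).eval (A i.succ))))
      = (∏ j : Fin k, (1/((j:ℚ)+1))) *
        (Matrix.of (fun i j : Fin k =>
          (descPochhammer ℚ ((j:ℕ)+1)).eval (A i.castSucc)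
            - (descPochhammer ℚ ((j:ℕ)+1)).eval (A i.succ))).det := by
    exact Matrix.det_mul_row (fun j : Fin k => (1/((j:ℚ)+1))) _
  rw [step4]
  have step5 : (Matrix.vandermonde A).det = Wp (k+1) lam * En (k+1) := by
    have hAeq : (fun i : Fin (k+1) => ((lam i : ℚ)) + ((k+1 : ℕ) : ℚ) - 1 - i) = A := by
      funext i
      simp only [hA]
      push_cast
      ring
    rw [Wp_mul_En (k+1) lam, hAeq]
  have step6 := det_diff k A
  rw [step5] at step6
  have hprodinv : (∏ j : Fin k, (1/((j:ℚ)+1))) = 1/(k.factorial : ℚ) := by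
    rw [← fin_prod_fact k, Finset.prod_div_distrib]
    simp
  have step7 : (Matrix.of (fun i j : Fin k =>
          (descPochhammer ℚ ((j:ℕ)+1)).eval (A i.castSucc)
            - (descPochhammer ℚ ((j:ℕ)+1)).eval (A i.succ))).det
      = (-1)^k * (Wp (k+1) lam * En (k+1)) := by
    have hsq : ((-1:ℚ)^k) * ((-1:ℚ)^k) = 1 := by
      rw [← pow_add]; exact Even.neg_one_pow ⟨k, rfl⟩
    calc (Matrix.of (fun i j : Fin k =>
          (descPochhammer ℚ ((j:ℕ)+1)).eval (A i.castSucc)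
            - (descPochhammer ℚ ((j:ℕ)+1)).eval (A i.succ))).det
        = ((-1:ℚ)^k * (-1:ℚ)^k) * (Matrix.of (fun i j : Fin k =>
          (descPochhammer ℚ ((j:ℕ)+1)).eval (A i.castSucc)
            - (descPochhammer ℚ ((j:ℕ)+1)).eval (A i.succ))).det := by rw [hsq, one_mul]
      _ = (-1)^k * (Wp (k+1) lam * En (k+1)) := by rw [mul_assoc, ← step6]
  rw [step7, hprodinv, En_succ k]
  have hsq : ((-1:ℚ)^k) * ((-1:ℚ)^k) = 1 := by
    rw [← pow_add]; exact Even.neg_one_pow ⟨k, rfl⟩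
  field_simp
  rw [sq, hsq, one_mul]



lemma ssyt_col_ge {k : ℕ} {lam : ℕ → ℕ} {T : ℕ → ℕ → ℕ} (hlam : Antitone lam)
    (hT : IsSSYT k lam T) : ∀ i, 0 < lam i → i + 1 ≤ T i 0 := by
  intro i
  induction i with
  | zero => intro h; exact (hT.1 0 0 h).1
  | succ n ih =>
    intro h
    have h0 : 0 < lam n := lt_of_lt_of_le h (hlam (Nat.le_succ n))
    have := hT.2.2.2 n 0 h
    omega

lemma ssyt_row_mono {k : ℕ} {lam : ℕ → ℕ} {T : ℕ → ℕ → ℕ}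
    (hT : IsSSYT k lam T) {i j j' : ℕ} (h : j ≤ j') (h' : j' < lam i) : T i j ≤ T i j' := by
  induction j' with
  | zero => have : j = 0 := by omega
            subst this; rfl
  | succ m ih =>
    rcases Nat.le_succ_iff.mp h with h1 | h1
    · calc T i j ≤ T i m := ih h1 (by omega)
        _ ≤ T i (m+1) := hT.2.2.1 i m h'
    · subst h1; rfl

lemma ssyt_finite (k m : ℕ) (lam : ℕ → ℕ) (hlam : Antitone lam)
    (hz : ∀ i, m ≤ i → lam i = 0) : Finite {T : ℕ → ℕ → ℕ // IsSSYT k lam T} := by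
  have : Function.Injective
      (fun (T : {T : ℕ → ℕ → ℕ // IsSSYT k lam T}) (i : Fin m) (j : Fin (lam 0)) =>
        (⟨T.1 i j, by
          by_cases hj : (j : ℕ) < lam (i : ℕ)
          · exact Nat.lt_succ_of_le (T.2.1 i j hj).2
          · rw [T.2.2.1 i j hj]; exact Nat.succ_pos k⟩ : Fin (k+1))) := by
    intro T S h
    ext i j
    by_cases hi : i < m
    · by_cases hj : j < lam 0
      · exact congrArg Fin.val (congrFun (congrFun h ⟨i, hi⟩) ⟨j, hj⟩)
      · rw [T.2.2.1 i j (by have := hlam (Nat.zero_le i); omega),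
          S.2.2.1 i j (by have := hlam (Nat.zero_le i); omega)]
    · rw [T.2.2.1 i j (by rw [hz i (by omega)]; omega),
        S.2.2.1 i j (by rw [hz i (by omega)]; omega)]
  exact Finite.of_injective _ this

section Bij
variable (k : ℕ) (lam : ℕ → ℕ)


noncomputable def nuf (k : ℕ) (T : ℕ → ℕ → ℕ) (i : ℕ) : ℕ := sInf {j | ¬(1 ≤ T i j ∧ T i j ≤ k)}

def strip (k : ℕ) (T : ℕ → ℕ → ℕ) (i j : ℕ) : ℕ := if T i j ≤ k then T i j else 0

def recon (k : ℕ) (lam m : ℕ → ℕ) (T' : ℕ → ℕ → ℕ) (i j : ℕ) : ℕ :=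
  if j < m i then T' i j else if j < lam i then k+1 else 0

variable {k : ℕ} {lam : ℕ → ℕ} {T : ℕ → ℕ → ℕ}

lemma nuf_mem_aux (hT : IsSSYT (k+1) lam T) (i : ℕ) : lam i ∈ {j | ¬(1 ≤ T i j ∧ T i j ≤ k)} := by
  have h0 : T i (lam i) = 0 := hT.2.1 i (lam i) (lt_irrefl _)
  simp [Set.mem_setOf_eq, h0]

lemma nuf_le (hT : IsSSYT (k+1) lam T) (i : ℕ) : nuf k T i ≤ lam i := Nat.sInf_le (nuf_mem_aux hT i)

lemma nuf_lt (hT : IsSSYT (k+1) lam T) {i j : ℕ} (h : j < nuf k T i) : 1 ≤ T i j ∧ T i j ≤ k := by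
  have := Nat.notMem_of_lt_sInf h
  simpa [Set.mem_setOf_eq] using this

lemma nuf_ge (hT : IsSSYT (k+1) lam T) {i j : ℕ} (h : nuf k T i ≤ j) (h' : j < lam i) : T i j = k + 1 := by
  have hmem : ¬(1 ≤ T i (nuf k T i) ∧ T i (nuf k T i) ≤ k) :=
    Nat.sInf_mem ⟨lam i, nuf_mem_aux hT i⟩
  have hb := hT.1 i (nuf k T i) (lt_of_le_of_lt h h')
  have hval : T i (nuf k T i) = k + 1 := by omega
  have hmono := ssyt_row_mono hT h h'
  have := (hT.1 i j h').2
  omega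

lemma nuf_interlace' (hT : IsSSYT (k+1) lam T) (hlam : Antitone lam) (i : ℕ) : lam (i+1) ≤ nuf k T i := by
  by_contra h
  push_neg at h
  have hmem : ¬(1 ≤ T i (nuf k T i) ∧ T i (nuf k T i) ≤ k) :=
    Nat.sInf_mem ⟨lam i, nuf_mem_aux hT i⟩
  have h1 := hT.2.2.2 i (nuf k T i) h
  have h2 := hT.1 (i+1) (nuf k T i) h
  have h3 := hT.1 i (nuf k T i) (lt_of_lt_of_le h (hlam (Nat.le_succ i)))
  omega

lemma nuf_zero (hT : IsSSYT (k+1) lam T) (hlam : Antitone lam) {i : ℕ} (hi : k ≤ i) : nuf k T i = 0 := by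
  have hmem : 0 ∈ {j | ¬(1 ≤ T i j ∧ T i j ≤ k)} := by
    by_cases h : 0 < lam i
    · have := ssyt_col_ge hlam hT i h
      simp only [Set.mem_setOf_eq]
      omega
    · have : T i 0 = 0 := hT.2.1 i 0 (by omega)
      simp [Set.mem_setOf_eq, this]
  exact Nat.le_zero.mp (Nat.sInf_le hmem)

lemma strip_ssyt (hT : IsSSYT (k+1) lam T) (hlam : Antitone lam) : IsSSYT k (nuf k T) (strip k T) := by
  refine ⟨fun i j h => ?_, fun i j h => ?_, fun i j h => ?_, fun i j h => ?_⟩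
  · have := nuf_lt hT h
    simp only [strip, if_pos this.2]
    exact this
  · push_neg at h
    by_cases h' : j < lam i
    · have := nuf_ge hT h h'
      simp [strip, this]
    · have := hT.2.1 i j h'
      simp [strip, this]
  · have h1 := nuf_lt hT (show j < nuf k T i by omega)
    have h2 := nuf_lt hT h
    simp only [strip, if_pos h1.2, if_pos h2.2]
    exact hT.2.2.1 i j (by have := nuf_le hT i; omega)
  · have hj2 : j < lam (i+1) := lt_of_lt_of_le h (nuf_le hT (i+1))
    have hj1 : j < nuf k T i := lt_of_lt_of_le hj2 (nuf_interlace' hT hlam i)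
    have h1 := nuf_lt hT hj1
    have h2 := nuf_lt hT h
    simp only [strip, if_pos h1.2, if_pos h2.2]
    exact hT.2.2.2 i j hj2

lemma recon_eq (hT : IsSSYT (k+1) lam T) : recon k lam (nuf k T) (strip k T) = T := by
  funext i j
  unfold recon strip
  by_cases h1 : j < nuf k T i
  · have hb := (nuf_lt hT h1).2
    simp only [if_pos h1, if_pos hb]
  · simp only [if_neg h1]
    by_cases h2 : j < lam i
    · rw [if_pos h2]; exact (nuf_ge hT (by omega) h2).symm
    · rw [if_neg h2]; exact (hT.2.1 i j h2).symm

variable {m : ℕ → ℕ} {T' : ℕ → ℕ → ℕ}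

lemma recon_ssyt (hm1 : ∀ i, m i ≤ lam i) (hm2 : ∀ i, lam (i+1) ≤ m i)
    (hT' : IsSSYT k m T') : IsSSYT (k+1) lam (recon k lam m T') := by
  refine ⟨fun i j h => ?_, fun i j h => ?_, fun i j h => ?_, fun i j h => ?_⟩
  · unfold recon
    by_cases h1 : j < m i
    · simp only [if_pos h1]
      have := hT'.1 i j h1
      omega
    · simp only [if_neg h1, if_pos h]
      omega
  · unfold recon
    have := hm1 i
    rw [if_neg (show ¬ j < m i by omega), if_neg h]
  · unfold recon
    by_cases h1 : j + 1 < m i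
    · rw [if_pos (by omega), if_pos h1]
      exact hT'.2.2.1 i j h1
    · by_cases h2 : j < m i
      · rw [if_pos h2, if_neg h1, if_pos h]
        have := hT'.1 i j h2
        omega
      · rw [if_neg h2, if_neg h1, if_pos (show j < lam i by omega), if_pos h]
  · have hj : j < m i := lt_of_lt_of_le h (hm2 i)
    unfold recon
    rw [if_pos hj]
    have hb := hT'.1 i j hj
    by_cases h1 : j < m (i+1)
    · rw [if_pos h1]
      exact hT'.2.2.2 i j h1
    · rw [if_neg h1, if_pos h]
      omega

lemma nuf_recon (hm1 : ∀ i, m i ≤ lam i) (hT' : IsSSYT k m T') : nuf k (recon k lam m T') = m := by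
  funext i
  have hmem : m i ∈ {j | ¬(1 ≤ recon k lam m T' i j ∧ recon k lam m T' i j ≤ k)} := by
    simp only [Set.mem_setOf_eq, recon, if_neg (lt_irrefl (m i))]
    by_cases h : m i < lam i <;> simp [h]
  have hlow : ∀ j < m i, 1 ≤ recon k lam m T' i j ∧ recon k lam m T' i j ≤ k := by
    intro j hj
    simp only [recon, if_pos hj]
    exact hT'.1 i j hj
  refine le_antisymm (Nat.sInf_le hmem) ?_
  by_contra h
  push_neg at h
  have hne : Set.Nonempty {j | ¬(1 ≤ recon k lam m T' i j ∧ recon k lam m T' i j ≤ k)} :=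
    ⟨m i, hmem⟩
  have := Nat.sInf_mem hne
  simp only [Set.mem_setOf_eq] at this
  exact this (hlow _ h)

lemma strip_recon (hT' : IsSSYT k m T') : strip k (recon k lam m T') = T' := by
  funext i j
  unfold strip recon
  by_cases h1 : j < m i
  · have hb := (hT'.1 i j h1).2
    simp only [if_pos h1, if_pos hb]
  · rw [if_neg h1]
    have h0 : T' i j = 0 := hT'.2.1 i j h1
    by_cases h2 : j < lam i
    · simp [h2, h0]
    · simp [h2, h0]

end Bij

section Card
variable {k : ℕ} {lam : ℕ → ℕ}

lemma extf_le {μ : Fin k → ℕ} (hμ : ∀ i : Fin k, lam ((i:ℕ)+1) ≤ μ i ∧ μ i ≤ lam (i:ℕ)) :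
    ∀ i, extf k μ i ≤ lam i := by
  intro i
  unfold extf
  split
  · exact (hμ ⟨i, ‹_›⟩).2
  · exact Nat.zero_le _

lemma extf_ge (hz : ∀ i, k+1 ≤ i → lam i = 0) {μ : Fin k → ℕ}
    (hμ : ∀ i : Fin k, lam ((i:ℕ)+1) ≤ μ i ∧ μ i ≤ lam (i:ℕ)) :
    ∀ i, lam (i+1) ≤ extf k μ i := by
  intro i
  unfold extf
  split
  · exact (hμ ⟨i, ‹_›⟩).1
  · rw [hz (i+1) (by omega)]

lemma extf_zero (μ : Fin k → ℕ) : ∀ i, k ≤ i → extf k μ i = 0 := by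
  intro i hi
  unfold extf
  rw [dif_neg (by omega)]

lemma extf_antitone (hz : ∀ i, k+1 ≤ i → lam i = 0) {μ : Fin k → ℕ}
    (hμ : ∀ i : Fin k, lam ((i:ℕ)+1) ≤ μ i ∧ μ i ≤ lam (i:ℕ)) :
    Antitone (extf k μ) :=
  antitone_nat_of_succ_le fun i => le_trans (extf_le hμ (i+1)) (extf_ge hz hμ i)

lemma card_step (hlam : Antitone lam) (hz : ∀ i, k+1 ≤ i → lam i = 0) :
    Nat.card {T : ℕ → ℕ → ℕ // IsSSYT (k+1) lam T}
      = ∑ μ ∈ Fintype.piFinset (fun i : Fin k => Finset.Icc (lam ((i:ℕ)+1)) (lam (i:ℕ))),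
          Nat.card {T' : ℕ → ℕ → ℕ // IsSSYT k (extf k μ) T'} := by
  set S := Fintype.piFinset (fun i : Fin k => Finset.Icc (lam ((i:ℕ)+1)) (lam (i:ℕ))) with hS
  have hmemS : ∀ μ : Fin k → ℕ,
      μ ∈ S ↔ ∀ i : Fin k, lam ((i:ℕ)+1) ≤ μ i ∧ μ i ≤ lam (i:ℕ) := by
    intro μ
    simp [hS, Fintype.mem_piFinset, Finset.mem_Icc]
  -- the bijection
  have hF : ∀ (μ : ↥S) (T' : {T' : ℕ → ℕ → ℕ // IsSSYT k (extf k μ.1) T'}),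
      IsSSYT (k+1) lam (recon k lam (extf k μ.1) T'.1) := by
    intro μ T'
    exact recon_ssyt (extf_le ((hmemS μ.1).mp μ.2)) (extf_ge hz ((hmemS μ.1).mp μ.2)) T'.2
  set F : (Σ μ : ↥S, {T' : ℕ → ℕ → ℕ // IsSSYT k (extf k μ.1) T'})
      → {T : ℕ → ℕ → ℕ // IsSSYT (k+1) lam T} :=
    fun p => ⟨recon k lam (extf k p.1.1) p.2.1, hF p.1 p.2⟩ with hFdef
  have hbij : Function.Bijective F := by
    constructor
    · rintro ⟨⟨μ, hμ⟩, ⟨T', hT'⟩⟩ ⟨⟨σ, hσ⟩, ⟨U', hU'⟩⟩ h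
      have hval : recon k lam (extf k μ) T' = recon k lam (extf k σ) U' :=
        congrArg Subtype.val h
      have h1 : extf k μ = extf k σ := by
        rw [← nuf_recon (extf_le ((hmemS μ).mp hμ)) hT',
          ← nuf_recon (extf_le ((hmemS σ).mp hσ)) hU', hval]
      have hμσ : μ = σ := by
        funext i
        have := congrFun h1 (i:ℕ)
        simpa [extf, i.isLt] using this
      subst hμσ
      have h2 : T' = U' := by
        rw [← strip_recon hT', ← strip_recon hU', hval]
      subst h2
      rfl
    · rintro ⟨T, hT⟩
      have hmem : (fun i : Fin k => nuf k T (i:ℕ)) ∈ S := by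
        rw [hmemS]
        exact fun i => ⟨nuf_interlace' hT hlam i, nuf_le hT i⟩
      have hsh : extf k (fun i : Fin k => nuf k T (i:ℕ)) = nuf k T := by
        funext i
        unfold extf
        split
        · rfl
        · exact (nuf_zero hT hlam (by omega)).symm
      refine ⟨⟨⟨(fun i : Fin k => nuf k T (i:ℕ)), hmem⟩, ⟨strip k T, ?_⟩⟩, ?_⟩
      · rw [hsh]
        exact strip_ssyt hT hlam
      · apply Subtype.ext
        show recon k lam (extf k (fun i : Fin k => nuf k T (i:ℕ))) (strip k T) = T
        rw [hsh]
        exact recon_eq hT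
  rw [← Nat.card_congr (Equiv.ofBijective F hbij)]
  haveI : ∀ μ : ↥S, Finite {T' : ℕ → ℕ → ℕ // IsSSYT k (extf k μ.1) T'} := fun μ =>
    ssyt_finite k k _ (extf_antitone hz ((hmemS μ.1).mp μ.2)) (extf_zero μ.1)
  haveI : ∀ μ : ↥S, Fintype {T' : ℕ → ℕ → ℕ // IsSSYT k (extf k μ.1) T'} := fun μ =>
    Fintype.ofFinite _
  rw [Nat.card_eq_fintype_card, Fintype.card_sigma]
  rw [← Finset.sum_coe_sort S (fun μ => Nat.card {T' : ℕ → ℕ → ℕ // IsSSYT k (extf k μ) T'})]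
  exact Finset.sum_congr rfl fun μ _ => (Nat.card_eq_fintype_card).symm
end Card

lemma count (k : ℕ) : ∀ (lam : ℕ → ℕ), Antitone lam → (∀ i, k ≤ i → lam i = 0) →
    (Nat.card {T : ℕ → ℕ → ℕ // IsSSYT k lam T} : ℚ) = Wp k lam := by
  induction k with
  | zero =>
    intro lam hlam hz
    have hall : ∀ i, lam i = 0 := fun i => hz i (Nat.zero_le i)
    have huniq : Nat.card {T : ℕ → ℕ → ℕ // IsSSYT 0 lam T} = 1 := by
      rw [Nat.card_eq_one_iff_unique]
      refine ⟨⟨?_⟩, ⟨⟨fun _ _ => 0, ?_, ?_, ?_, ?_⟩⟩⟩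
      · rintro ⟨T, hT⟩ ⟨U, hU⟩
        apply Subtype.ext; funext i j
        show T i j = U i j
        rw [hT.2.1 i j (by rw [hall i]; omega), hU.2.1 i j (by rw [hall i]; omega)]
      · intro i j h; rw [hall i] at h; omega
      · intro i j h; rfl
      · intro i j h; exact le_refl _
      · intro i j h; rw [hall (i+1)] at h; omega
    rw [huniq]
    simp [Wp]
  | succ k ih =>
    intro lam hlam hz
    rw [card_step hlam hz, Nat.cast_sum]
    rw [Finset.sum_congr rfl (fun μ hμ => ih (extf k μ)
      (extf_antitone hz (by simpa [Fintype.mem_piFinset, Finset.mem_Icc] using hμ))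
      (extf_zero μ))]
    exact branch k lam (fun i => hlam (Nat.le_succ i))

lemma Wp_split (k r : ℕ) (lam : ℕ → ℕ) (hr : r ≤ k) (hzero : ∀ i, r ≤ i → lam i = 0) :
    Wp k lam = (∏ p ∈ (Finset.range r ×ˢ Finset.range r).filter (fun p => p.1 < p.2),
        (((lam p.1 : ℚ) - lam p.2 + p.2 - p.1) / ((p.2 : ℚ) - p.1))) *
      ∏ i ∈ Finset.range r, poch ((lam i : ℚ) + r - i) (k - r) / poch ((r : ℚ) - i) (k - r) := by
  have hsplit : (range k ×ˢ range k).filter (fun p : ℕ × ℕ => p.1 < p.2)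
      = ((range r ×ˢ range r).filter (fun p => p.1 < p.2))
        ∪ ((range r ×ˢ Ico r k)
        ∪ ((Ico r k ×ˢ Ico r k).filter (fun p => p.1 < p.2))) := by
    ext p
    simp only [mem_union, mem_filter, mem_product, mem_range, mem_Ico]
    omega
  have hd2 : Disjoint (range r ×ˢ Ico r k)
      ((Ico r k ×ˢ Ico r k).filter (fun p : ℕ × ℕ => p.1 < p.2)) := by
    rw [Finset.disjoint_left]
    intro p hp hp'
    simp only [mem_filter, mem_product, mem_range, mem_Ico] at hp hp'
    omega
  have hd1 : Disjoint ((range r ×ˢ range r).filter (fun p : ℕ × ℕ => p.1 < p.2))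
      ((range r ×ˢ Ico r k)
        ∪ ((Ico r k ×ˢ Ico r k).filter (fun p : ℕ × ℕ => p.1 < p.2))) := by
    rw [Finset.disjoint_left]
    intro p hp hp'
    simp only [mem_union, mem_filter, mem_product, mem_range, mem_Ico] at hp hp'
    omega
  rw [Wp, hsplit, prod_union hd1, prod_union hd2]
  have hA3 : (∏ p ∈ (Ico r k ×ˢ Ico r k).filter (fun p : ℕ × ℕ => p.1 < p.2),
      (((lam p.1 : ℚ) - lam p.2 + p.2 - p.1) / ((p.2 : ℚ) - p.1))) = 1 := by
    refine prod_eq_one fun p hp => ?_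
    simp only [mem_filter, mem_product, mem_Ico] at hp
    have hne : (p.2 : ℚ) - p.1 ≠ 0 := by
      rw [sub_ne_zero]
      exact_mod_cast (Nat.ne_of_lt hp.2).symm
    rw [hzero p.1 hp.1.1.1, hzero p.2 hp.1.2.1]
    rw [show ((0:ℕ):ℚ) - ((0:ℕ):ℚ) + (p.2:ℚ) - p.1 = (p.2:ℚ) - p.1 by push_cast; ring]
    exact div_self hne
  have hA2 : (∏ p ∈ range r ×ˢ Ico r k,
      (((lam p.1 : ℚ) - lam p.2 + p.2 - p.1) / ((p.2 : ℚ) - p.1)))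
      = ∏ i ∈ range r, poch ((lam i : ℚ) + r - i) (k - r) / poch ((r : ℚ) - i) (k - r) := by
    rw [Finset.prod_product]
    refine prod_congr rfl fun i hi => ?_
    simp only [mem_range] at hi
    rw [Finset.prod_Ico_eq_prod_range, poch, poch, ← prod_div_distrib]
    refine prod_congr rfl fun t ht => ?_
    rw [hzero (r + t) (by omega)]
    congr 1
    · push_cast; ring
    · push_cast; ring
  rw [hA3, hA2, mul_one]

/-- The number of semistandard Young tableaux of shape `λ = (λ₁,…,λ_r)` with entries
in `{1,…,k}` equals, for `r ≤ k`,
`∏_{1≤i<j≤r} (λ_i − λ_j + j − i)/(j − i) · ∏_{i=1}^{r} (λ_i + r + 1 − i)_{k−r} / (r + 1 − i)_{k−r}`,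
and equals `0` when `r > k` and `λ_r > 0` (rows are 0-based here). -/
theorem stmt_11 (k r : ℕ) (lam : ℕ → ℕ) (hlam : Antitone lam)
    (hzero : ∀ i, r ≤ i → lam i = 0) :
    (r ≤ k →
      (Nat.card {T : ℕ → ℕ → ℕ // IsSSYT k lam T} : ℚ)
      = (∏ p ∈ (Finset.range r ×ˢ Finset.range r).filter (fun p => p.1 < p.2),
            (((lam p.1 : ℚ) - lam p.2 + p.2 - p.1) / ((p.2 : ℚ) - p.1))) *
        ∏ i ∈ Finset.range r,
            poch ((lam i : ℚ) + r - i) (k - r) / poch ((r : ℚ) - i) (k - r)) ∧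
    (k < r → 0 < lam (r - 1) →
      Nat.card {T : ℕ → ℕ → ℕ // IsSSYT k lam T} = 0) := by
  constructor
  · intro hrk
    rw [count k lam hlam (fun i hi => hzero i (le_trans hrk hi))]
    exact Wp_split k r lam hrk hzero
  · intro hkr hpos
    have : IsEmpty {T : ℕ → ℕ → ℕ // IsSSYT k lam T} := by
      refine ⟨fun x => ?_⟩
      obtain ⟨T, hT⟩ := x
      have h1 := ssyt_col_ge hlam hT (r-1) hpos
      have h2 := (hT.1 (r-1) 0 hpos).2
      omega
    exact Nat.card_of_isEmpty
end

section
/- For any partition λ and any permutation π of {1,…,n}, the number of strict plane partitions of shape λ with exactly x_i parts equal to i for each i ∈ {1,…,n} equals the number of strict plane partitions of shape λ with exactly x_{π(i)} parts equal to i for each i. -/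
/-- `T` is a strict plane partition of shape `lam` with entries in `{1,…,n}`:
cells are `(i,j)` with `j < lam i` (0-based), rows weakly decrease, columns strictly
decrease, entries outside the shape are `0`. -/
def IsSPPShape (n : ℕ) (lam : ℕ → ℕ) (T : ℕ → ℕ → ℕ) : Prop :=
  (∀ i j, j < lam i → 1 ≤ T i j ∧ T i j ≤ n) ∧
  (∀ i j, ¬ j < lam i → T i j = 0) ∧
  (∀ i j, j + 1 < lam i → T i (j + 1) ≤ T i j) ∧
  (∀ i j, j < lam (i + 1) → T (i + 1) j < T i j)

/-- The number of parts of `T` (within shape `lam`) equal to `v`. -/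
noncomputable def partCount (lam : ℕ → ℕ) (T : ℕ → ℕ → ℕ) (v : ℕ) : ℕ :=
  Set.ncard {p : ℕ × ℕ | p.2 < lam p.1 ∧ T p.1 p.2 = v}

namespace BKaux

open Finset

/-- `(i,j)` is a free cell for the Bender–Knuth move on values `k, k+1`. -/
def Free (lam : ℕ → ℕ) (k : ℕ) (T : ℕ → ℕ → ℕ) (i j : ℕ) : Prop :=
  j < lam i ∧ (T i j = k + 1 ∧ T (i + 1) j ≠ k ∨
    T i j = k ∧ (i = 0 ∨ T (i - 1) j ≠ k + 1))

instance (lam : ℕ → ℕ) (k : ℕ) (T : ℕ → ℕ → ℕ) (i j : ℕ) :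
    Decidable (Free lam k T i j) := by
  unfold Free; infer_instance

lemma free_above' {lam : ℕ → ℕ} {k : ℕ} {T : ℕ → ℕ → ℕ} {i j : ℕ}
    (h : Free lam k T i j) (hv : T i j = k) : ∀ i', i = i' + 1 → T i' j ≠ k + 1 := by
  rintro i' rfl
  rcases h.2 with ⟨h1, -⟩ | ⟨-, h2 | h2⟩
  · intro _; omega
  · omega
  · simpa using h2

noncomputable def fpos (lam : ℕ → ℕ) (k : ℕ) (T : ℕ → ℕ → ℕ) (i j : ℕ) : ℕ :=
  ((range j).filter (fun j' => Free lam k T i j')).card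

noncomputable def gcnt (lam : ℕ → ℕ) (k : ℕ) (T : ℕ → ℕ → ℕ) (i : ℕ) : ℕ :=
  ((range (lam i)).filter (fun j => Free lam k T i j ∧ T i j = k)).card

noncomputable def rcnt (lam : ℕ → ℕ) (k : ℕ) (T : ℕ → ℕ → ℕ) (i : ℕ) : ℕ :=
  ((range (lam i)).filter (fun j => Free lam k T i j ∧ T i j = k + 1)).card

noncomputable def fcnt (lam : ℕ → ℕ) (k : ℕ) (T : ℕ → ℕ → ℕ) (i : ℕ) : ℕ :=
  ((range (lam i)).filter (fun j => Free lam k T i j)).card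

/-- The Bender–Knuth involution on values `k, k+1`. -/
noncomputable def bk (lam : ℕ → ℕ) (k : ℕ) (T : ℕ → ℕ → ℕ) : ℕ → ℕ → ℕ :=
  fun i j => if Free lam k T i j then
    (if fpos lam k T i j < gcnt lam k T i then k + 1 else k) else T i j

variable {n k : ℕ} {lam : ℕ → ℕ} {T : ℕ → ℕ → ℕ}

lemma free_lt {i j : ℕ} (h : Free lam k T i j) : j < lam i := h.1

lemma free_val {i j : ℕ} (h : Free lam k T i j) : T i j = k + 1 ∨ T i j = k := by
  rcases h.2 with ⟨h, -⟩ | ⟨h, -⟩ <;> [exact Or.inl h; exact Or.inr h]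

lemma free_val_ge {i j : ℕ} (h : Free lam k T i j) : k ≤ T i j := by
  rcases free_val h with h | h <;> omega

lemma free_val_le {i j : ℕ} (h : Free lam k T i j) : T i j ≤ k + 1 := by
  rcases free_val h with h | h <;> omega

lemma shape_of_pos (hT : IsSPPShape n lam T) {i j : ℕ} (h : 1 ≤ T i j) : j < lam i := by
  by_contra hc
  have := hT.2.1 i j hc
  omega

lemma rowMono (hT : IsSPPShape n lam T) {i j1 j2 : ℕ} (h12 : j1 ≤ j2) (h2 : j2 < lam i) :
    T i j2 ≤ T i j1 := by
  induction j2 with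
  | zero =>
    have : j1 = 0 := by omega
    subst this; exact le_refl _
  | succ j ih =>
    rcases Nat.eq_or_lt_of_le h12 with rfl | hlt
    · exact le_refl _
    · exact le_trans (hT.2.2.1 i j h2) (ih (by omega) (by omega))

lemma free_above (hT : IsSPPShape n lam T) {i j : ℕ} (h : Free lam k T (i + 1) j) :
    k + 2 ≤ T i j := by
  have hcs := hT.2.2.2 i j h.1
  rcases free_val h with hv | hv
  · omega
  · have := free_above' h hv i rfl
    omega

lemma free_below (hT : IsSPPShape n lam T) (hk : 1 ≤ k) {i j : ℕ} (h : Free lam k T i j) :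
    T (i + 1) j < k := by
  by_cases hs : j < lam (i + 1)
  · have hcs := hT.2.2.2 i j hs
    rcases h.2 with ⟨hv, hne⟩ | ⟨hv, -⟩ <;> omega
  · have := hT.2.1 (i + 1) j hs
    omega

lemma not_free_below (hT : IsSPPShape n lam T) (hk : 1 ≤ k) {i j : ℕ}
    (h : Free lam k T i j) : ¬ Free lam k T (i + 1) j := fun hc =>
  absurd (free_val_ge hc) (by have := free_below hT hk h; omega)

lemma not_free_above (hT : IsSPPShape n lam T) {i j : ℕ}
    (h : Free lam k T (i + 1) j) : ¬ Free lam k T i j := fun hc =>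
  absurd (free_val_le hc) (by have := free_above hT h; omega)

lemma bk_of_not_free {i j : ℕ} (h : ¬ Free lam k T i j) : bk lam k T i j = T i j :=
  if_neg h

lemma bk_free_val {i j : ℕ} (h : Free lam k T i j) :
    bk lam k T i j = k + 1 ∨ bk lam k T i j = k := by
  unfold bk
  rw [if_pos h]
  split <;> simp

lemma nf_k1 (hT : IsSPPShape n lam T) {i j : ℕ} (hlt : j < lam i) (hv : T i j = k + 1)
    (hnf : ¬ Free lam k T i j) : T (i + 1) j = k := by
  unfold Free at hnf
  push_neg at hnf
  exact (hnf hlt).1 hv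

lemma nf_k (hk : 1 ≤ k) {i j : ℕ} (hlt : j < lam i) (hv : T i j = k)
    (hnf : ¬ Free lam k T i j) : ∃ i', i = i' + 1 ∧ T i' j = k + 1 := by
  unfold Free at hnf
  push_neg at hnf
  obtain ⟨hi0, hveq⟩ := (hnf hlt).2 hv
  exact ⟨i - 1, by omega, hveq⟩

end BKaux
-- counting lemmas, appended after the base
namespace BKaux
open Finset

variable {n k : ℕ} {lam : ℕ → ℕ} {T : ℕ → ℕ → ℕ}

/-- In any finite set of naturals, the number of elements having fewer than `t`
smaller elements in the set is `min t` the size of the set. -/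
lemma min_counting (S : Finset ℕ) (t : ℕ) :
    (S.filter (fun j => ((range j).filter (· ∈ S)).card < t)).card = min t S.card := by
  induction S using Finset.induction_on_max with
  | empty => simp
  | insert a s ha ih =>
    have hmem : a ∉ s := fun hc => lt_irrefl a (ha a hc)
    have hpos_a : ((range a).filter (· ∈ insert a s)).card = s.card := by
      congr 1
      apply Finset.ext
      intro j
      simp only [mem_filter, mem_range, mem_insert]
      constructor
      · rintro ⟨hja, rfl | hj⟩
        · omega
        · exact hj
      · intro hj
        exact ⟨ha j hj, Or.inr hj⟩
    have hfc : ∀ j ∈ s, ((range j).filter (· ∈ insert a s)).card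
        = ((range j).filter (· ∈ s)).card := by
      intro j hj
      congr 1
      apply filter_congr
      intro j' hj'
      simp only [mem_range] at hj'
      have : j' ≠ a := by have := ha j hj; omega
      simp [mem_insert, this]
    rw [filter_insert]
    by_cases hc : s.card < t
    · rw [if_pos (by rwa [hpos_a]), card_insert_of_notMem
        (fun hm => hmem (mem_of_mem_filter a hm))]
      have : (s.filter (fun j => ((range j).filter (· ∈ insert a s)).card < t)).card
          = (s.filter (fun j => ((range j).filter (· ∈ s)).card < t)).card := by
        congr 1
        exact filter_congr (fun j hj => by rw [hfc j hj])
      rw [this, ih, card_insert_of_notMem hmem]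
      omega
    · rw [if_neg (by rwa [hpos_a])]
      have : (s.filter (fun j => ((range j).filter (· ∈ insert a s)).card < t)).card
          = (s.filter (fun j => ((range j).filter (· ∈ s)).card < t)).card := by
        congr 1
        exact filter_congr (fun j hj => by rw [hfc j hj])
      rw [this, ih, card_insert_of_notMem hmem]
      omega

lemma fpos_eq_posS (i j : ℕ) :
    fpos lam k T i j
      = ((range j).filter (· ∈ (range (lam i)).filter (Free lam k T i))).card := by
  unfold fpos
  congr 1
  apply filter_congr
  intro j' _
  simp only [mem_filter, mem_range]
  constructor
  · intro h; exact ⟨free_lt h, h⟩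
  · intro h; exact h.2

lemma card_free_pos_lt (i t : ℕ) (ht : t ≤ fcnt lam k T i) :
    ((range (lam i)).filter (fun j => Free lam k T i j ∧ fpos lam k T i j < t)).card = t := by
  have key := min_counting ((range (lam i)).filter (Free lam k T i)) t
  have hset : ((range (lam i)).filter (Free lam k T i)).filter
        (fun j => ((range j).filter (· ∈ (range (lam i)).filter (Free lam k T i))).card < t)
      = (range (lam i)).filter (fun j => Free lam k T i j ∧ fpos lam k T i j < t) := by
    rw [filter_filter]
    apply filter_congr
    intro j _
    rw [fpos_eq_posS]
  rw [hset] at key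
  rw [key]
  have he : fcnt lam k T i = ((range (lam i)).filter (Free lam k T i)).card := rfl
  omega

lemma filter_split (s : Finset ℕ) (P Q : ℕ → Prop) [DecidablePred P] [DecidablePred Q] :
    (s.filter fun j => P j ∧ Q j).card + (s.filter fun j => P j ∧ ¬ Q j).card
      = (s.filter fun j => P j).card := by
  rw [← card_union_of_disjoint]
  · congr 1
    rw [← filter_or]
    apply filter_congr
    intro j _
    tauto
  · rw [Finset.disjoint_left]
    intro a ha hb
    rw [mem_filter] at ha hb
    tauto

lemma card_free_pos_ge (i t : ℕ) (ht : t ≤ fcnt lam k T i) :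
    ((range (lam i)).filter (fun j => Free lam k T i j ∧ ¬ fpos lam k T i j < t)).card
      = fcnt lam k T i - t := by
  have h1 := filter_split (range (lam i)) (Free lam k T i) (fun j => fpos lam k T i j < t)
  beta_reduce at h1
  have h2 := card_free_pos_lt (lam := lam) (k := k) (T := T) i t ht
  unfold fcnt at *
  omega

lemma fcnt_eq (i : ℕ) : fcnt lam k T i = gcnt lam k T i + rcnt lam k T i := by
  have h1 := filter_split (range (lam i)) (Free lam k T i) (fun j => T i j = k)
  beta_reduce at h1
  have h2 : ((range (lam i)).filter (fun j => Free lam k T i j ∧ ¬ T i j = k)).card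
      = rcnt lam k T i := by
    unfold rcnt
    congr 1
    apply filter_congr
    intro j _
    constructor
    · rintro ⟨hf, hne⟩
      rcases free_val hf with h | h
      · exact ⟨hf, h⟩
      · exact absurd h hne
    · rintro ⟨hf, hv⟩
      exact ⟨hf, by omega⟩
  unfold fcnt gcnt rcnt at *
  omega

lemma gcnt_le_fcnt (i : ℕ) : gcnt lam k T i ≤ fcnt lam k T i := by
  apply card_le_card
  intro j hj
  rw [mem_filter] at *
  exact ⟨hj.1, hj.2.1⟩

lemma fpos_lt_rcnt_iff (hT : IsSPPShape n lam T) {i j : ℕ} (h : Free lam k T i j) :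
    T i j = k + 1 ↔ fpos lam k T i j < rcnt lam k T i := by
  constructor
  · intro hv
    have hsub : insert j ((range j).filter (fun j' => Free lam k T i j'))
        ⊆ (range (lam i)).filter (fun j' => Free lam k T i j' ∧ T i j' = k + 1) := by
      intro j' hj'
      rcases mem_insert.mp hj' with rfl | hj'
      · exact mem_filter.mpr ⟨mem_range.mpr (free_lt h), h, hv⟩
      · rw [mem_filter, mem_range] at hj'
        obtain ⟨hjlt, hf⟩ := hj'
        have h1 : T i j ≤ T i j' := rowMono hT (le_of_lt hjlt) (free_lt h)
        have h2 : T i j' ≤ k + 1 := free_val_le hf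
        exact mem_filter.mpr ⟨mem_range.mpr (free_lt hf), hf, by omega⟩
    have := card_le_card hsub
    rw [card_insert_of_notMem (fun hc => by
      have := mem_range.mp (mem_filter.mp hc).1; omega)] at this
    unfold fpos rcnt
    omega
  · intro hp
    rcases free_val h with hv | hv
    · exact hv
    · exfalso
      have hsub : (range (lam i)).filter (fun j' => Free lam k T i j' ∧ T i j' = k + 1)
          ⊆ (range j).filter (fun j' => Free lam k T i j') := by
        intro j' hj'
        rw [mem_filter, mem_range] at hj'
        obtain ⟨hjlt, hf, hv'⟩ := hj'
        rw [mem_filter, mem_range]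
        refine ⟨?_, hf⟩
        by_contra hc
        have := rowMono hT (show j ≤ j' by omega) hjlt
        omega
      have := card_le_card hsub
      unfold fpos rcnt at *
      omega

end BKaux
namespace BKaux
open Finset

variable {n k : ℕ} {lam : ℕ → ℕ} {T : ℕ → ℕ → ℕ}

lemma free_k1_below {i j : ℕ} (h : Free lam k T i j) (hv : T i j = k + 1) :
    T (i + 1) j ≠ k := by
  rcases h.2 with ⟨-, h2⟩ | ⟨h2, -⟩
  · exact h2
  · omega

lemma fpos_succ_free {i j : ℕ} (h : Free lam k T i j) :
    fpos lam k T i (j + 1) = fpos lam k T i j + 1 := by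
  unfold fpos
  rw [range_add_one, filter_insert, if_pos h, card_insert_of_notMem
    (fun hc => by have := mem_range.mp (mem_of_mem_filter _ hc); omega)]

lemma bk_isSPP (hlam : Antitone lam) (hT : IsSPPShape n lam T) (hk : 1 ≤ k)
    (hkn : k + 1 ≤ n) : IsSPPShape n lam (bk lam k T) := by
  refine ⟨?_, ?_, ?_, ?_⟩
  · intro i j hj
    by_cases hf : Free lam k T i j
    · rcases bk_free_val hf with h | h <;> omega
    · rw [bk_of_not_free hf]; exact hT.1 i j hj
  · intro i j hj
    have hnf : ¬ Free lam k T i j := fun hc => hj (free_lt hc)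
    rw [bk_of_not_free hnf]; exact hT.2.1 i j hj
  · intro i j hj
    by_cases h1 : Free lam k T i (j + 1) <;> by_cases h0 : Free lam k T i j
    · -- both free
      have hp := fpos_succ_free (lam := lam) (k := k) (T := T) h0
      unfold bk
      rw [if_pos h1, if_pos h0]
      split_ifs <;> omega
    · -- j+1 free, j not free
      rw [bk_of_not_free h0]
      have hTj1 : k ≤ T i (j + 1) := free_val_ge h1
      have hmono : T i (j + 1) ≤ T i j := hT.2.2.1 i j hj
      rcases bk_free_val h1 with hb | hb
      · -- bk i (j+1) = k + 1 : show k + 1 ≤ T i j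
        rw [hb]
        by_contra hc
        have hTj : T i j = k := by omega
        obtain ⟨i', rfl, hup⟩ := nf_k hk (by omega) hTj h0
        have hv1 : T (i' + 1) (j + 1) = k := by
          rcases free_val h1 with h | h <;> omega
        have hcs := hT.2.2.2 i' (j + 1) (free_lt h1)
        have hrm : T i' (j + 1) ≤ T i' j :=
          rowMono hT (by omega) (lt_of_lt_of_le (free_lt h1) (hlam (by omega)))
        have := free_above' h1 hv1 i' rfl
        omega
      · rw [hb]; omega
    · -- j free, j+1 not free
      rw [bk_of_not_free h1]
      have hmono : T i (j + 1) ≤ T i j := hT.2.2.1 i j hj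
      rcases bk_free_val h0 with hb | hb
      · rw [hb]
        have := free_val_le h0
        omega
      · rw [hb]
        rcases free_val h0 with hv | hv
        · -- T i j = k+1, bk i j = k : show T i (j+1) ≤ k
          by_contra hc
          have hv1 : T i (j + 1) = k + 1 := by omega
          have hb1 : T (i + 1) (j + 1) = k := nf_k1 hT hj hv1 h1
          have hs1 : j + 1 < lam (i + 1) := shape_of_pos hT (by omega)
          have hrm : T (i + 1) (j + 1) ≤ T (i + 1) j := rowMono hT (by omega) hs1
          have hcs : T (i + 1) j < T i j := hT.2.2.2 i j (by omega)
          exact free_k1_below h0 hv (by omega)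
        · omega
    · -- neither free
      rw [bk_of_not_free h1, bk_of_not_free h0]
      exact hT.2.2.1 i j hj
  · intro i j hj
    by_cases h1 : Free lam k T (i + 1) j <;> by_cases h0 : Free lam k T i j
    · exact absurd (free_val_ge h1) (by have := free_below hT hk h0; omega)
    · rw [bk_of_not_free h0]
      have := free_above hT h1
      have := free_val_le h1
      rcases bk_free_val h1 with hb | hb <;> omega
    · rw [bk_of_not_free h1]
      have := free_below hT hk h0
      rcases bk_free_val h0 with hb | hb <;> omega
    · rw [bk_of_not_free h1, bk_of_not_free h0]
      exact hT.2.2.2 i j hj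

lemma free_bk_iff (hT : IsSPPShape n lam T) (hk : 1 ≤ k) {i j : ℕ} :
    Free lam k (bk lam k T) i j ↔ Free lam k T i j := by
  constructor
  · -- contrapositive
    intro hc
    by_contra hnf
    have hbk : bk lam k T i j = T i j := bk_of_not_free hnf
    have hlt : j < lam i := hc.1
    rcases free_val hc with hv | hv
    · -- bk i j = k + 1, so T i j = k + 1
      rw [hbk] at hv
      have hb : T (i + 1) j = k := nf_k1 hT hlt hv hnf
      have hnf1 : ¬ Free lam k T (i + 1) j := by
        intro hf1
        rcases free_val hf1 with h | h
        · omega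
        · exact free_above' hf1 h i rfl hv
      have hbk1 : bk lam k T (i + 1) j = k := by rw [bk_of_not_free hnf1, hb]
      rcases hc.2 with ⟨-, h2⟩ | ⟨h2, -⟩
      · exact h2 hbk1
      · omega
    · -- bk i j = k, so T i j = k
      rw [hbk] at hv
      obtain ⟨i', rfl, hup⟩ := nf_k hk hlt hv hnf
      have hnf' : ¬ Free lam k T i' j := by
        intro hf'
        exact free_k1_below hf' hup hv
      have hbk' : bk lam k T i' j = k + 1 := by rw [bk_of_not_free hnf', hup]
      rcases hc.2 with ⟨h2, -⟩ | ⟨-, h2 | h2⟩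
      · omega
      · omega
      · exact h2 (by simpa using hbk')
  · intro h
    refine ⟨free_lt h, ?_⟩
    have hbelow : bk lam k T (i + 1) j = T (i + 1) j :=
      bk_of_not_free (not_free_below hT hk h)
    have hbne : bk lam k T (i + 1) j ≠ k := by
      have := free_below hT hk h
      omega
    rcases bk_free_val h with hb | hb
    · exact Or.inl ⟨hb, hbne⟩
    · refine Or.inr ⟨hb, ?_⟩
      rcases Nat.eq_zero_or_pos i with rfl | hi
      · exact Or.inl rfl
      · right
        have hup : Free lam k T ((i - 1) + 1) j := by
          have : (i - 1) + 1 = i := by omega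
          rwa [this]
        have hnfa : ¬ Free lam k T (i - 1) j := not_free_above hT hup
        rw [bk_of_not_free hnfa]
        have := free_above hT hup
        omega

lemma fpos_bk (hT : IsSPPShape n lam T) (hk : 1 ≤ k) (i j : ℕ) :
    fpos lam k (bk lam k T) i j = fpos lam k T i j := by
  unfold fpos
  congr 1
  exact filter_congr fun j' _ => by rw [free_bk_iff hT hk]

lemma gcnt_bk (hT : IsSPPShape n lam T) (hk : 1 ≤ k) (i : ℕ) :
    gcnt lam k (bk lam k T) i = rcnt lam k T i := by
  unfold gcnt
  have hstep : ((range (lam i)).filter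
        (fun j => Free lam k (bk lam k T) i j ∧ bk lam k T i j = k)).card
      = ((range (lam i)).filter
        (fun j => Free lam k T i j ∧ ¬ fpos lam k T i j < gcnt lam k T i)).card := by
    congr 1
    apply filter_congr
    intro j _
    rw [free_bk_iff hT hk]
    constructor
    · rintro ⟨hf, hv⟩
      refine ⟨hf, fun hlt => ?_⟩
      unfold bk at hv
      rw [if_pos hf, if_pos hlt] at hv
      omega
    · rintro ⟨hf, hge⟩
      refine ⟨hf, ?_⟩
      unfold bk
      rw [if_pos hf, if_neg hge]
  rw [hstep, card_free_pos_ge i (gcnt lam k T i) (gcnt_le_fcnt i)]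
  have := fcnt_eq (lam := lam) (k := k) (T := T) i
  omega

lemma bk_invol (hT : IsSPPShape n lam T) (hk : 1 ≤ k) :
    bk lam k (bk lam k T) = T := by
  funext i j
  by_cases hf : Free lam k T i j
  · have hf' : Free lam k (bk lam k T) i j := (free_bk_iff hT hk).mpr hf
    show (if Free lam k (bk lam k T) i j then _ else _) = T i j
    rw [if_pos hf', fpos_bk hT hk, gcnt_bk hT hk]
    rcases free_val hf with hv | hv
    · rw [if_pos ((fpos_lt_rcnt_iff hT hf).mp hv), hv]
    · rw [if_neg (fun hc => by have := (fpos_lt_rcnt_iff hT hf).mpr hc; omega)]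
      omega
  · have hf' : ¬ Free lam k (bk lam k T) i j := fun hc => hf ((free_bk_iff hT hk).mp hc)
    rw [bk_of_not_free hf', bk_of_not_free hf]

end BKaux
namespace BKaux
open Finset

variable {n k : ℕ} {lam : ℕ → ℕ} {T : ℕ → ℕ → ℕ}

noncomputable def rowCnt (lam : ℕ → ℕ) (T : ℕ → ℕ → ℕ) (v i : ℕ) : ℕ :=
  ((range (lam i)).filter (fun j => T i j = v)).card

noncomputable def nfk (lam : ℕ → ℕ) (k : ℕ) (T : ℕ → ℕ → ℕ) (i : ℕ) : ℕ :=
  ((range (lam i)).filter (fun j => T i j = k ∧ ¬ Free lam k T i j)).card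

noncomputable def nfk1 (lam : ℕ → ℕ) (k : ℕ) (T : ℕ → ℕ → ℕ) (i : ℕ) : ℕ :=
  ((range (lam i)).filter (fun j => T i j = k + 1 ∧ ¬ Free lam k T i j)).card

lemma partCount_eq_sum (hlam : Antitone lam) {m : ℕ} (hm : ∀ i, m ≤ i → lam i = 0)
    (v : ℕ) : partCount lam T v = ∑ i ∈ range m, rowCnt lam T v i := by
  classical
  set F : Finset (ℕ × ℕ) :=
    (range m ×ˢ range (lam 0)).filter (fun p => p.2 < lam p.1 ∧ T p.1 p.2 = v) with hF
  have hset : {p : ℕ × ℕ | p.2 < lam p.1 ∧ T p.1 p.2 = v} = ↑F := by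
    ext p
    simp only [hF, Set.mem_setOf_eq, coe_filter, mem_product, mem_range, Set.mem_setOf_eq]
    constructor
    · rintro ⟨h1, h2⟩
      refine ⟨⟨?_, lt_of_lt_of_le h1 (hlam (Nat.zero_le _))⟩, h1, h2⟩
      by_contra hc
      have := hm p.1 (by omega)
      omega
    · rintro ⟨-, h⟩
      exact h
  rw [partCount, hset, Set.ncard_coe_finset]
  rw [card_eq_sum_card_fiberwise (f := Prod.fst) (t := range m)
    (fun p hp => (mem_product.mp (mem_filter.mp hp).1).1)]
  apply sum_congr rfl
  intro i hi
  rw [rowCnt]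
  refine card_bij' (fun p _ => p.2) (fun j _ => (i, j)) ?_ ?_ ?_ ?_
  · intro p hp
    simp only [hF, mem_filter, mem_product, mem_range] at hp ⊢
    obtain ⟨⟨⟨-, -⟩, h1, h2⟩, h3⟩ := hp
    subst h3
    exact ⟨h1, h2⟩
  · intro j hj
    simp only [mem_filter, mem_range] at hj
    simp only [hF, mem_filter, mem_product, mem_range]
    refine ⟨⟨⟨mem_range.mp hi, lt_of_lt_of_le hj.1 (hlam (Nat.zero_le _))⟩, hj.1, hj.2⟩, trivial⟩
  · intro p hp
    simp only [mem_filter] at hp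
    exact Prod.ext hp.2.symm rfl
  · intro j _
    rfl

lemma rowCnt_T_k (i : ℕ) : rowCnt lam T k i = nfk lam k T i + gcnt lam k T i := by
  have h := filter_split (range (lam i)) (fun j => T i j = k) (fun j => Free lam k T i j)
  beta_reduce at h
  have hg : ((range (lam i)).filter (fun j => T i j = k ∧ Free lam k T i j)).card
      = gcnt lam k T i := by
    unfold gcnt; congr 1; exact filter_congr fun j _ => and_comm
  unfold rowCnt nfk at *
  omega

lemma rowCnt_T_k1 (i : ℕ) : rowCnt lam T (k + 1) i = nfk1 lam k T i + rcnt lam k T i := by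
  have h := filter_split (range (lam i)) (fun j => T i j = k + 1) (fun j => Free lam k T i j)
  beta_reduce at h
  have hg : ((range (lam i)).filter (fun j => T i j = k + 1 ∧ Free lam k T i j)).card
      = rcnt lam k T i := by
    unfold rcnt; congr 1; exact filter_congr fun j _ => and_comm
  unfold rowCnt nfk1 at *
  omega

lemma rowCnt_bk_k (hT : IsSPPShape n lam T) (hk : 1 ≤ k) (i : ℕ) :
    rowCnt lam (bk lam k T) k i = nfk lam k T i + rcnt lam k T i := by
  have h := filter_split (range (lam i)) (fun j => bk lam k T i j = k)
    (fun j => Free lam k T i j)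
  beta_reduce at h
  have h1 : ((range (lam i)).filter (fun j => bk lam k T i j = k ∧ ¬ Free lam k T i j)).card
      = nfk lam k T i := by
    unfold nfk; congr 1
    apply filter_congr
    intro j _
    constructor
    · rintro ⟨hv, hnf⟩; exact ⟨by rwa [bk_of_not_free hnf] at hv, hnf⟩
    · rintro ⟨hv, hnf⟩; exact ⟨by rwa [bk_of_not_free hnf], hnf⟩
  have h2 : ((range (lam i)).filter (fun j => bk lam k T i j = k ∧ Free lam k T i j)).card
      = ((range (lam i)).filter
          (fun j => Free lam k T i j ∧ ¬ fpos lam k T i j < gcnt lam k T i)).card := by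
    congr 1
    apply filter_congr
    intro j _
    constructor
    · rintro ⟨hv, hf⟩
      refine ⟨hf, fun hlt => ?_⟩
      unfold bk at hv
      rw [if_pos hf, if_pos hlt] at hv
      omega
    · rintro ⟨hf, hge⟩
      refine ⟨?_, hf⟩
      unfold bk
      rw [if_pos hf, if_neg hge]
  rw [h2, card_free_pos_ge i (gcnt lam k T i) (gcnt_le_fcnt i)] at h
  have hf := fcnt_eq (lam := lam) (k := k) (T := T) i
  unfold rowCnt
  omega

lemma rowCnt_bk_k1 (hT : IsSPPShape n lam T) (hk : 1 ≤ k) (i : ℕ) :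
    rowCnt lam (bk lam k T) (k + 1) i = nfk1 lam k T i + gcnt lam k T i := by
  have h := filter_split (range (lam i)) (fun j => bk lam k T i j = k + 1)
    (fun j => Free lam k T i j)
  beta_reduce at h
  have h1 : ((range (lam i)).filter
        (fun j => bk lam k T i j = k + 1 ∧ ¬ Free lam k T i j)).card
      = nfk1 lam k T i := by
    unfold nfk1; congr 1
    apply filter_congr
    intro j _
    constructor
    · rintro ⟨hv, hnf⟩; exact ⟨by rwa [bk_of_not_free hnf] at hv, hnf⟩
    · rintro ⟨hv, hnf⟩; exact ⟨by rwa [bk_of_not_free hnf], hnf⟩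
  have h2 : ((range (lam i)).filter (fun j => bk lam k T i j = k + 1 ∧ Free lam k T i j)).card
      = ((range (lam i)).filter
          (fun j => Free lam k T i j ∧ fpos lam k T i j < gcnt lam k T i)).card := by
    congr 1
    apply filter_congr
    intro j _
    constructor
    · rintro ⟨hv, hf⟩
      refine ⟨hf, ?_⟩
      by_contra hge
      unfold bk at hv
      rw [if_pos hf, if_neg hge] at hv
      omega
    · rintro ⟨hf, hlt⟩
      refine ⟨?_, hf⟩
      unfold bk
      rw [if_pos hf, if_pos hlt]
  rw [h2, card_free_pos_lt i (gcnt lam k T i) (gcnt_le_fcnt i)] at h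
  unfold rowCnt
  omega

lemma rowCnt_bk_other (hv : v ≠ k) (hv1 : v ≠ k + 1) (i : ℕ) :
    rowCnt lam (bk lam k T) v i = rowCnt lam T v i := by
  unfold rowCnt
  congr 1
  apply filter_congr
  intro j _
  by_cases hf : Free lam k T i j
  · constructor
    · intro h; exact absurd h (by rcases bk_free_val hf with h' | h' <;> omega)
    · intro h; exact absurd h (by rcases free_val hf with h' | h' <;> omega)
  · rw [bk_of_not_free hf]

lemma nfk_succ (hT : IsSPPShape n lam T) (hk : 1 ≤ k) (i : ℕ) :
    nfk lam k T (i + 1) = nfk1 lam k T i := by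
  unfold nfk nfk1
  congr 1
  apply Finset.ext
  intro j
  simp only [mem_filter, mem_range]
  constructor
  · rintro ⟨hlt, hv, hnf⟩
    obtain ⟨i', hi', hup⟩ := nf_k hk hlt hv hnf
    have hii : i' = i := by omega
    subst hii
    refine ⟨shape_of_pos hT (by omega), hup, fun hf => ?_⟩
    exact free_k1_below hf hup hv
  · rintro ⟨hlt, hv, hnf⟩
    have hb : T (i + 1) j = k := nf_k1 hT hlt hv hnf
    refine ⟨shape_of_pos hT (by omega), hb, fun hf => ?_⟩
    rcases free_val hf with h | h
    · omega
    · exact free_above' hf h i rfl hv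

lemma nfk_zero (hk : 1 ≤ k) : nfk lam k T 0 = 0 := by
  unfold nfk
  rw [card_eq_zero, filter_eq_empty_iff]
  rintro j hj ⟨hv, hnf⟩
  obtain ⟨i', hi', -⟩ := nf_k hk (mem_range.mp hj) hv hnf
  omega

lemma nfk1_zero_of (hT : IsSPPShape n lam T) (hk : 1 ≤ k) {i : ℕ} (h0 : lam (i + 1) = 0) :
    nfk1 lam k T i = 0 := by
  unfold nfk1
  rw [card_eq_zero, filter_eq_empty_iff]
  rintro j hj ⟨hv, hnf⟩
  have hb : T (i + 1) j = k := nf_k1 hT (mem_range.mp hj) hv hnf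
  have := hT.2.1 (i + 1) j (by omega)
  omega

lemma sum_nfk_eq (hT : IsSPPShape n lam T) (hk : 1 ≤ k) {m : ℕ} (hm : lam m = 0) :
    ∑ i ∈ range m, nfk lam k T i = ∑ i ∈ range m, nfk1 lam k T i := by
  cases m with
  | zero => rfl
  | succ mm =>
    rw [Finset.sum_range_succ' (fun i => nfk lam k T i) mm, Finset.sum_range_succ]
    rw [nfk_zero hk, nfk1_zero_of hT hk hm]
    simp only [add_zero]
    exact sum_congr rfl (fun i _ => nfk_succ hT hk i)

lemma pc_bk_k (hlam : Antitone lam) (hT : IsSPPShape n lam T) (hk : 1 ≤ k)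
    {m : ℕ} (hm : ∀ i, m ≤ i → lam i = 0) :
    partCount lam (bk lam k T) k = partCount lam T (k + 1) := by
  rw [partCount_eq_sum hlam hm, partCount_eq_sum hlam hm]
  rw [sum_congr rfl (fun i _ => rowCnt_bk_k hT hk i),
    sum_congr rfl (fun i _ => rowCnt_T_k1 (lam := lam) (k := k) (T := T) i)]
  rw [Finset.sum_add_distrib, Finset.sum_add_distrib, sum_nfk_eq hT hk (hm m le_rfl)]

lemma pc_bk_k1 (hlam : Antitone lam) (hT : IsSPPShape n lam T) (hk : 1 ≤ k)
    {m : ℕ} (hm : ∀ i, m ≤ i → lam i = 0) :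
    partCount lam (bk lam k T) (k + 1) = partCount lam T k := by
  rw [partCount_eq_sum hlam hm, partCount_eq_sum hlam hm]
  rw [sum_congr rfl (fun i _ => rowCnt_bk_k1 hT hk i),
    sum_congr rfl (fun i _ => rowCnt_T_k (lam := lam) (k := k) (T := T) i)]
  rw [Finset.sum_add_distrib, Finset.sum_add_distrib, sum_nfk_eq hT hk (hm m le_rfl)]

lemma pc_bk_other (hlam : Antitone lam) {v : ℕ} (hv : v ≠ k) (hv1 : v ≠ k + 1)
    {m : ℕ} (hm : ∀ i, m ≤ i → lam i = 0) :
    partCount lam (bk lam k T) v = partCount lam T v := by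
  rw [partCount_eq_sum hlam hm, partCount_eq_sum hlam hm]
  exact sum_congr rfl (fun i _ => rowCnt_bk_other hv hv1 i)

end BKaux
namespace BKaux
open Finset

variable {n : ℕ} {lam : ℕ → ℕ}

lemma swap_conj {α : Type*} [DecidableEq α] {a b c : α} (hab : a ≠ b) (hac : a ≠ c)
    (hcb : c ≠ b) (v : α) :
    Equiv.swap a c (Equiv.swap c b (Equiv.swap a c v)) = Equiv.swap a b v := by
  rcases eq_or_ne v a with rfl | hva
  · rw [Equiv.swap_apply_left, Equiv.swap_apply_left,
      Equiv.swap_apply_of_ne_of_ne (Ne.symm hab) (Ne.symm hcb), Equiv.swap_apply_left]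
  · rcases eq_or_ne v b with rfl | hvb
    · rw [Equiv.swap_apply_of_ne_of_ne (Ne.symm hab) (Ne.symm hcb),
        Equiv.swap_apply_right, Equiv.swap_apply_right, Equiv.swap_apply_right]
    · rcases eq_or_ne v c with rfl | hvc
      · rw [Equiv.swap_apply_right, Equiv.swap_apply_of_ne_of_ne hac hab,
          Equiv.swap_apply_left, Equiv.swap_apply_of_ne_of_ne (Ne.symm hac) hcb]
      · rw [Equiv.swap_apply_of_ne_of_ne hva hvc,
          Equiv.swap_apply_of_ne_of_ne hvc hvb,
          Equiv.swap_apply_of_ne_of_ne hva hvc,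
          Equiv.swap_apply_of_ne_of_ne hva hvb]

lemma N_adj (hlam : Antitone lam) {m : ℕ} (hm : ∀ i, m ≤ i → lam i = 0)
    (y : Fin n → ℕ) (a b : Fin n) (hab : (b : ℕ) = (a : ℕ) + 1) :
    Nat.card {T : ℕ → ℕ → ℕ // IsSPPShape n lam T ∧
        ∀ v : Fin n, partCount lam T ((v : ℕ) + 1) = y v}
    = Nat.card {T : ℕ → ℕ → ℕ // IsSPPShape n lam T ∧
        ∀ v : Fin n, partCount lam T ((v : ℕ) + 1) = y (Equiv.swap a b v)} := by
  have hk1 : 1 ≤ (a : ℕ) + 1 := by omega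
  have hkn : ((a : ℕ) + 1) + 1 ≤ n := by have := b.isLt; omega
  apply Nat.card_congr
  refine ⟨fun S => ⟨bk lam ((a : ℕ) + 1) S.1,
      bk_isSPP hlam S.2.1 hk1 hkn, ?_⟩,
    fun S => ⟨bk lam ((a : ℕ) + 1) S.1,
      bk_isSPP hlam S.2.1 hk1 hkn, ?_⟩, ?_, ?_⟩
  · intro v
    rcases eq_or_ne v a with rfl | hva
    · rw [Equiv.swap_apply_left, pc_bk_k hlam S.2.1 hk1 hm]
      have hb := S.2.2 b
      rw [hab] at hb
      exact hb
    · rcases eq_or_ne v b with rfl | hvb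
      · rw [Equiv.swap_apply_right, hab, pc_bk_k1 hlam S.2.1 hk1 hm]
        exact S.2.2 a
      · have h1 : (v : ℕ) + 1 ≠ (a : ℕ) + 1 := fun h => hva (Fin.ext (by omega))
        have h2 : (v : ℕ) + 1 ≠ ((a : ℕ) + 1) + 1 := fun h => hvb (Fin.ext (by omega))
        rw [Equiv.swap_apply_of_ne_of_ne hva hvb, pc_bk_other hlam h1 h2 hm]
        exact S.2.2 v
  · intro v
    rcases eq_or_ne v a with rfl | hva
    · rw [pc_bk_k hlam S.2.1 hk1 hm]
      have hb := S.2.2 b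
      rw [hab, Equiv.swap_apply_right] at hb
      exact hb
    · rcases eq_or_ne v b with rfl | hvb
      · rw [hab, pc_bk_k1 hlam S.2.1 hk1 hm]
        have ha := S.2.2 a
        rw [Equiv.swap_apply_left] at ha
        exact ha
      · have h1 : (v : ℕ) + 1 ≠ (a : ℕ) + 1 := fun h => hva (Fin.ext (by omega))
        have h2 : (v : ℕ) + 1 ≠ ((a : ℕ) + 1) + 1 := fun h => hvb (Fin.ext (by omega))
        rw [pc_bk_other hlam h1 h2 hm]
        have hv := S.2.2 v
        rw [Equiv.swap_apply_of_ne_of_ne hva hvb] at hv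
        exact hv
  · intro S
    exact Subtype.ext (bk_invol S.2.1 hk1)
  · intro S
    exact Subtype.ext (bk_invol S.2.1 hk1)

lemma N_swap_dist (hlam : Antitone lam) {m : ℕ} (hm : ∀ i, m ≤ i → lam i = 0) :
    ∀ (d : ℕ) (y : Fin n → ℕ) (a b : Fin n), (b : ℕ) = (a : ℕ) + d →
    Nat.card {T : ℕ → ℕ → ℕ // IsSPPShape n lam T ∧
        ∀ v : Fin n, partCount lam T ((v : ℕ) + 1) = y v}
    = Nat.card {T : ℕ → ℕ → ℕ // IsSPPShape n lam T ∧
        ∀ v : Fin n, partCount lam T ((v : ℕ) + 1) = y (Equiv.swap a b v)} := by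
  intro d
  induction d with
  | zero =>
    intro y a b hab
    have hba : a = b := Fin.ext (by omega)
    subst hba
    simp only [Equiv.swap_self, Equiv.refl_apply]
  | succ d ih =>
    intro y a b hab
    rcases Nat.eq_zero_or_pos d with rfl | hd
    · exact N_adj hlam hm y a b (by omega)
    · have hcn : (a : ℕ) + 1 < n := by have := b.isLt; omega
      set c : Fin n := ⟨(a : ℕ) + 1, by omega⟩ with hc
      have hab' : a ≠ b := fun h => by rw [h] at hab; omega
      have hac : a ≠ c := fun h => by
        have : (a : ℕ) = (c : ℕ) := congrArg _ h
        simp [hc] at this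
      have hcb : c ≠ b := fun h => by
        have : (c : ℕ) = (b : ℕ) := congrArg _ h
        simp [hc] at this
        omega
      have h1 := N_adj hlam hm y a c (by simp [hc])
      have h2 := ih (fun v => y (Equiv.swap a c v)) c b (by simp [hc]; omega)
      have h3 := N_adj hlam hm
        (fun v => y (Equiv.swap a c (Equiv.swap c b v))) a c (by simp [hc])
      have h4 : Nat.card {T : ℕ → ℕ → ℕ // IsSPPShape n lam T ∧
            ∀ v : Fin n, partCount lam T ((v : ℕ) + 1)
              = y (Equiv.swap a c (Equiv.swap c b (Equiv.swap a c v)))}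
          = Nat.card {T : ℕ → ℕ → ℕ // IsSPPShape n lam T ∧
            ∀ v : Fin n, partCount lam T ((v : ℕ) + 1) = y (Equiv.swap a b v)} := by
        apply Nat.card_congr
        apply Equiv.subtypeEquivRight
        intro T
        exact and_congr_right fun _ => forall_congr' fun v => by
          rw [swap_conj hab' hac hcb v]
      exact (((h1.trans (h2.trans h3))).trans h4)

lemma N_perm (hlam : Antitone lam) {m : ℕ} (hm : ∀ i, m ≤ i → lam i = 0)
    (σ : Equiv.Perm (Fin n)) :
    ∀ (y : Fin n → ℕ),
    Nat.card {T : ℕ → ℕ → ℕ // IsSPPShape n lam T ∧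
        ∀ v : Fin n, partCount lam T ((v : ℕ) + 1) = y v}
    = Nat.card {T : ℕ → ℕ → ℕ // IsSPPShape n lam T ∧
        ∀ v : Fin n, partCount lam T ((v : ℕ) + 1) = y (σ v)} := by
  refine Equiv.Perm.swap_induction_on σ ?_ ?_
  · intro y
    rfl
  · intro f a b hab ih y
    have hs : Nat.card {T : ℕ → ℕ → ℕ // IsSPPShape n lam T ∧
          ∀ v : Fin n, partCount lam T ((v : ℕ) + 1) = y v}
        = Nat.card {T : ℕ → ℕ → ℕ // IsSPPShape n lam T ∧
          ∀ v : Fin n, partCount lam T ((v : ℕ) + 1) = y (Equiv.swap a b v)} := by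
      rcases le_or_gt (a : ℕ) (b : ℕ) with h | h
      · exact N_swap_dist hlam hm ((b : ℕ) - (a : ℕ)) y a b (by omega)
      · have := N_swap_dist hlam hm ((a : ℕ) - (b : ℕ)) y b a (by omega)
        rw [Equiv.swap_comm a b]
        exact this
    exact hs.trans (ih (fun v => y (Equiv.swap a b v)))

end BKaux

/-- For any partition `λ` and any permutation `π` of `{1,…,n}`, the number of strict
plane partitions of shape `λ` with exactly `x_i` parts equal to `i` for each
`i ∈ {1,…,n}` equals the number with exactly `x_{π(i)}` parts equal to `i`. -/
theorem stmt_12 (n : ℕ) (lam : ℕ → ℕ) (hlam : Antitone lam)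
    (hfin : ∃ m, ∀ i, m ≤ i → lam i = 0)
    (x : Fin n → ℕ) (σ : Equiv.Perm (Fin n)) :
    Nat.card {T : ℕ → ℕ → ℕ // IsSPPShape n lam T ∧
        ∀ v : Fin n, partCount lam T ((v : ℕ) + 1) = x v}
    = Nat.card {T : ℕ → ℕ → ℕ // IsSPPShape n lam T ∧
        ∀ v : Fin n, partCount lam T ((v : ℕ) + 1) = x (σ v)} := by
  obtain ⟨m, hm⟩ := hfin
  exact BKaux.N_perm hlam hm σ x
end

section
/- For all integers y ≥ 0 and n ≥ 0, in the field ℚ(q): ∑_{x=1}^{y} [x;q]_n · q^x = (q/[n+1;q]) · [y;q]_{n+1}, where [X;q] = (1−q^X)/(1−q) and [X;q]_n = ∏_{i=0}^{n−1} [X+i;q]. -/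
/-!
The sum telescopes: `[x;q] + q^x [n+1;q] = [x+n+1;q]` gives
`[x+1;q]_{n+1} - [x;q]_{n+1} = q^x [n+1;q] [x+1;q]_n`, and `[0;q]_{n+1} = 0`.
-/

/-- The `q`-integer `[m;q] = (1 - q^m)/(1 - q)` in `ℚ(q)`, for any integer `m`. -/
noncomputable def qint (m : ℤ) : RatFunc ℚ := (1 - RatFunc.X ^ m) / (1 - RatFunc.X)

/-- `[a;q]_n = ∏_{i=0}^{n−1} [a+i;q]`. -/
noncomputable def qpoch (a : ℤ) (n : ℕ) : RatFunc ℚ := ∏ i ∈ Finset.range n, qint (a + i)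

open RatFunc Finset

lemma RatFunc.X_pow_ne_one {K : Type*} [Field K] {m : ℕ} (hm : m ≠ 0) :
    (X : RatFunc K) ^ m ≠ 1 := fun h ↦
  transcendental_X ⟨Polynomial.X ^ m - 1,
    (by simpa using Polynomial.X_pow_sub_C_ne_zero (Nat.pos_of_ne_zero hm) (1 : K)), by simp [h]⟩

lemma qint_zero : qint 0 = 0 := by simp [qint]

lemma qint_natCast_ne_zero {m : ℕ} (hm : m ≠ 0) : qint m ≠ 0 := by
  rw [qint, zpow_natCast]
  exact div_ne_zero (sub_ne_zero.2 (X_pow_ne_one hm).symm)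
    (sub_ne_zero.2 (by simpa using (X_pow_ne_one one_ne_zero).symm))

lemma qint_add (a b : ℤ) : qint (a + b) = qint a + X ^ a * qint b := by
  rw [qint, qint, qint, zpow_add₀ X_ne_zero, ← mul_div_assoc, ← add_div]
  ring

lemma qpoch_succ (a : ℤ) (n : ℕ) : qpoch a (n + 1) = qpoch a n * qint (a + n) :=
  prod_range_succ _ n

lemma qpoch_succ' (a : ℤ) (n : ℕ) : qpoch a (n + 1) = qint a * qpoch (a + 1) n := by
  rw [qpoch, prod_range_succ', qpoch, mul_comm]
  push_cast
  simp only [add_zero, add_assoc, add_comm (1 : ℤ)]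

lemma qpoch_zero_succ (n : ℕ) : qpoch 0 (n + 1) = 0 := by
  rw [qpoch_succ', qint_zero, zero_mul]

lemma qpoch_add_one_succ (a : ℤ) (n : ℕ) :
    qpoch (a + 1) (n + 1) = qpoch a (n + 1) + X ^ a * qint (n + 1) * qpoch (a + 1) n := by
  rw [qpoch_succ (a + 1), qpoch_succ', add_assoc, add_comm 1, qint_add]
  ring

/-- For integers `y ≥ 0`, `n ≥ 0`: `∑_{x=1}^{y} [x;q]_n q^x = (q/[n+1;q]) [y;q]_{n+1}`. -/
theorem stmt_14 (y n : ℕ) :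
    ∑ x ∈ Finset.Icc 1 y, qpoch (x : ℤ) n * (RatFunc.X : RatFunc ℚ) ^ x
    = RatFunc.X / qint ((n : ℤ) + 1) * qpoch (y : ℤ) (n + 1) := by
  induction y with
  | zero => simp [qpoch_zero_succ]
  | succ y ih =>
    have hn : qint ((n : ℤ) + 1) ≠ 0 := mod_cast qint_natCast_ne_zero n.succ_ne_zero
    rw [sum_Icc_succ_top (by omega), ih, Nat.cast_succ, qpoch_add_one_succ, zpow_natCast]
    field_simp
    ring
end

section
/- For a generalized (r,n,c) Gelfand–Tsetlin pattern whose top row begins with a negative entry k₁ ∈ {−1,−2,…,−r}, no such pattern exists; i.e., there is no array (a_{i,j})_{1≤i≤r+1, i−1≤j≤n+1} of integers with a_{i,i−1}=0, a_{i,n+1}=c, satisfying the interlacing conditions (a_{i,j} ≤ a_{i−1,j} ≤ a_{i,j+1} if a_{i,j} ≤ a_{i,j+1}, and a_{i,j} > a_{i−1,j} > a_{i,j+1} otherwise), with a_{r+1,r+1} ∈ {−1,…,−r}. -/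
/-- There is no generalized `(r,n,c)` Gelfand–Tsetlin pattern
`(a_{i,j})_{1 ≤ i ≤ r+1, i−1 ≤ j ≤ n+1}` (rows indexed bottom-up, boundary
`a_{i,i−1} = 0`, `a_{i,n+1} = c`, and each entry `a_{i−1,j}` lies weakly between its
northwest neighbour `a_{i,j}` and northeast neighbour `a_{i,j+1}` if
`a_{i,j} ≤ a_{i,j+1}`, strictly between them otherwise) whose entry
`a_{r+1,r+1}` lies in `{−1,−2,…,−r}`. -/
theorem stmt_19 (r n : ℕ) (c : ℤ) (hn : 1 ≤ n) (hr : r ≤ n) :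
    ¬ ∃ a : ℕ → ℕ → ℤ,
      (∀ i, 1 ≤ i → i ≤ r + 1 → a i (i - 1) = 0) ∧
      (∀ i, 1 ≤ i → i ≤ r + 1 → a i (n + 1) = c) ∧
      (∀ i j, 2 ≤ i → i ≤ r + 1 → i - 1 ≤ j → j ≤ n →
        ((a i j ≤ a i (j + 1) → a i j ≤ a (i - 1) j ∧ a (i - 1) j ≤ a i (j + 1)) ∧
         (a i (j + 1) < a i j → a i (j + 1) < a (i - 1) j ∧ a (i - 1) j < a i j))) ∧
      (-(r : ℤ) ≤ a (r + 1) (r + 1) ∧ a (r + 1) (r + 1) ≤ -1) := by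
  rintro ⟨a, h1, -, h3, hlb, hub⟩
  -- key induction: a (r+1-k) (r+1-k) ≤ -1 and a (r+1) (r+1) + k ≤ a (r+1-k) (r+1-k)
  have key : ∀ k, k ≤ r →
      a (r + 1 - k) (r + 1 - k) ≤ -1 ∧
      a (r + 1) (r + 1) + (k : ℤ) ≤ a (r + 1 - k) (r + 1 - k) := by
    intro k hk
    induction k with
    | zero => simpa using hub
    | succ k ih =>
      obtain ⟨ih1, ih2⟩ := ih (by omega)
      set i := r + 1 - k with hi
      have hi2 : 2 ≤ i := by omega
      have hzero : a i (i - 1) = 0 := h1 i (by omega) (by omega)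
      have hinter := h3 i (i - 1) hi2 (by omega) le_rfl (by omega)
      have hji : i - 1 + 1 = i := by omega
      rw [hji] at hinter
      have hstrict := hinter.2 (by rw [hzero]; omega)
      have hidx : r + 1 - (k + 1) = i - 1 := by omega
      rw [hidx]
      constructor
      · have := hstrict.2
        rw [hzero] at this
        omega
      · have := hstrict.1
        push_cast
        omega
  have := key r le_rfl
  simp only [Nat.add_sub_cancel_left] at this
  -- a 1 1 ≤ -1 and a (r+1) (r+1) + r ≤ a 1 1, with -r ≤ a (r+1) (r+1)
  omega
end
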